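/- arXiv:2305.05481 — 8 statements merged into one kernel-verified Lean document; each statement's English description precedes it below -/
import Mathlib

section
/- For every odd n ≥ 7, the family 𝓕ₙ = {A ⊆ [n] : 1 ∈ A and |A| ≥ (n+3)/2} ∪ {A ⊆ [n] : 1 ∉ A and |A| ≥ n−2} is 3-wise intersecting, i.e. any three of its members have a common element. -/
open Finset

/-- The ground set `[n] = {1, …, n}`. -/
def ground (n : ℕ) : Finset ℕ := Finset.Icc 1 n

/-- `F` is a family of subsets of `[n]`. -/
def FamilyOn (n : ℕ) (F : Finset (Finset ℕ)) : Prop := ∀ A ∈ F, A ⊆ ground n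

/-- `F` is 3-wise (1-)intersecting: any three members have a common element. -/
def ThreeWiseIntersecting (F : Finset (Finset ℕ)) : Prop :=
  ∀ A ∈ F, ∀ B ∈ F, ∀ C ∈ F, (A ∩ B ∩ C).Nonempty

/-- `F` is (2-wise) 3-intersecting: any two members meet in at least 3 elements. -/
def ThreeIntersecting (F : Finset (Finset ℕ)) : Prop :=
  ∀ A ∈ F, ∀ B ∈ F, 3 ≤ (A ∩ B).card

/-- The family `𝓕ₙ = {A ⊆ [n] : 1 ∈ A, |A| ≥ (n+3)/2} ∪ {A ⊆ [n] : 1 ∉ A, |A| ≥ n-2}`. -/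
def famF (n : ℕ) : Finset (Finset ℕ) :=
  (ground n).powerset.filter
    (fun A => (1 ∈ A ∧ (n + 3) / 2 ≤ A.card) ∨ (1 ∉ A ∧ n - 2 ≤ A.card))

/-- The left-compression `C_{ij}`. -/
def compress (i j : ℕ) (A : Finset ℕ) : Finset ℕ :=
  if j ∈ A ∧ i ∉ A then insert i (A.erase j) else A

/-- `F` is left-compressed (as a family of subsets of `[n]`). -/
def LeftCompressed (n : ℕ) (F : Finset (Finset ℕ)) : Prop :=
  ∀ A ∈ F, ∀ i j : ℕ, 1 ≤ i → i < j → j ≤ n → compress i j A ∈ F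

/-- `F` is an up-set of subsets of `[n]`. -/
def UpSetOn (n : ℕ) (F : Finset (Finset ℕ)) : Prop :=
  ∀ A ∈ F, ∀ B, A ⊆ B → B ⊆ ground n → B ∈ F

/-- `A` is a minimal element of `F`. -/
def MinimalIn (F : Finset (Finset ℕ)) (A : Finset ℕ) : Prop :=
  A ∈ F ∧ ∀ B, B ⊂ A → B ∉ F

lemma mem_famF (n : ℕ) {A : Finset ℕ} (hA : A ∈ famF n) :
    A ⊆ ground n ∧ ((1 ∈ A ∧ (n + 3) / 2 ≤ A.card) ∨ (1 ∉ A ∧ n - 2 ≤ A.card)) := by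
  simpa [famF, Finset.mem_filter, Finset.mem_powerset] using hA

lemma compl_card {n : ℕ} {A : Finset ℕ} (hA : A ⊆ ground n) :
    (ground n \ A).card = n - A.card := by
  rw [Finset.card_sdiff_of_subset hA]
  simp [ground, Nat.card_Icc]

lemma key_nonempty {n : ℕ} {A B C : Finset ℕ} (hA : A ⊆ ground n)
    (h : (ground n \ A).card + (ground n \ B).card + (ground n \ C).card < n) :
    (A ∩ B ∩ C).Nonempty := by
  by_contra hne
  rw [Finset.not_nonempty_iff_eq_empty] at hne
  have hsub : ground n ⊆ (ground n \ A) ∪ (ground n \ B) ∪ (ground n \ C) := by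
    intro x hx
    by_cases hxA : x ∈ A
    · by_cases hxB : x ∈ B
      · by_cases hxC : x ∈ C
        · exfalso
          have : x ∈ A ∩ B ∩ C := by simp [hxA, hxB, hxC]
          simp [hne] at this
        · simp [Finset.mem_union, hx, hxC]
      · simp [Finset.mem_union, hx, hxB]
    · simp [Finset.mem_union, hx, hxA]
  have hcard := Finset.card_le_card hsub
  have h1 : ((ground n \ A) ∪ (ground n \ B) ∪ (ground n \ C)).card ≤
      (ground n \ A).card + (ground n \ B).card + (ground n \ C).card :=
    le_trans (Finset.card_union_le _ _)
      (by exact Nat.add_le_add_right (Finset.card_union_le _ _) _)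
  have hg : (ground n).card = n := by simp [ground, Nat.card_Icc]
  omega

lemma bound_gen {n : ℕ} (hn : 7 ≤ n) (hodd : Odd n) {A : Finset ℕ} (hA : A ∈ famF n) :
    (ground n \ A).card ≤ (n - 3) / 2 := by
  obtain ⟨hsub, hcase⟩ := mem_famF n hA
  have hc := compl_card hsub
  obtain ⟨m, hm⟩ := hodd
  rcases hcase with ⟨_, h⟩ | ⟨_, h⟩ <;> omega

lemma bound_no1 {n : ℕ} (hn : 7 ≤ n) {A : Finset ℕ} (hA : A ∈ famF n) (h1 : 1 ∉ A) :
    (ground n \ A).card ≤ 2 := by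
  obtain ⟨hsub, hcase⟩ := mem_famF n hA
  have hc := compl_card hsub
  rcases hcase with ⟨h, _⟩ | ⟨_, h⟩
  · exact absurd h h1
  · omega

/-- for odd `n ≥ 7`, the family `𝓕ₙ` is 3-wise intersecting. -/
theorem stmt2 (n : ℕ) (hn : 7 ≤ n) (hodd : Odd n) :
    ThreeWiseIntersecting (famF n) := by
  intro A hA B hB C hC
  obtain ⟨m, hm⟩ := hodd
  have hAs := (mem_famF n hA).1
  have dA := bound_gen hn ⟨m, hm⟩ hA
  have dB := bound_gen hn ⟨m, hm⟩ hB
  have dC := bound_gen hn ⟨m, hm⟩ hC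
  by_cases h1A : 1 ∈ A
  · by_cases h1B : 1 ∈ B
    · by_cases h1C : 1 ∈ C
      · exact ⟨1, by simp [h1A, h1B, h1C]⟩
      · exact key_nonempty hAs (by have := bound_no1 hn hC h1C; omega)
    · exact key_nonempty hAs (by have := bound_no1 hn hB h1B; omega)
  · exact key_nonempty hAs (by have := bound_no1 hn hA h1A; omega)
end

section
/- Let n ≥ 8 and let 𝓕 be a left-compressed up-set of subsets of [n] that is both 3-wise intersecting and 3-intersecting. Suppose there is no pair (A, B) of minimal elements of 𝓕 such that n ∈ A ∩ B, A ∪ B = [n], and A ∩ B = {i, n−1, n} for some i < n−1. Then |𝓕| ≤ 2·M(n−1), where M(n−1) denotes the maximum cardinality of a family of subsets of [n−1] that is both 3-wise intersecting and 3-intersecting. -/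
open Finset

lemma exists_minimal_subset (F : Finset (Finset ℕ)) :
    ∀ A, A ∈ F → ∃ A₀, A₀ ⊆ A ∧ MinimalIn F A₀ := by
  intro A
  induction A using Finset.strongInductionOn with
  | _ A ih =>
    intro hA
    by_cases h : ∀ B, B ⊂ A → B ∉ F
    · exact ⟨A, Finset.Subset.rfl, hA, h⟩
    · push_neg at h
      obtain ⟨B, hBA, hBF⟩ := h
      obtain ⟨A₀, h1, h2⟩ := ih B hBA hBF
      exact ⟨A₀, h1.trans hBA.subset, h2⟩

lemma inter_insert_right' (n : ℕ) (X Y : Finset ℕ) (h : n ∉ X) :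
    X ∩ insert n Y = X ∩ Y := by
  ext a
  simp only [Finset.mem_inter, Finset.mem_insert]
  constructor
  · rintro ⟨h1, h2 | h2⟩
    · exact absurd (h2 ▸ h1) h
    · exact ⟨h1, h2⟩
  · rintro ⟨h1, h2⟩; exact ⟨h1, Or.inr h2⟩

lemma insert_inter_left' (n : ℕ) (X Y : Finset ℕ) (h : n ∉ Y) :
    insert n X ∩ Y = X ∩ Y := by
  rw [Finset.inter_comm, inter_insert_right' n Y X h, Finset.inter_comm]

lemma insert_inter_insert' (n : ℕ) (X Y : Finset ℕ) :
    insert n X ∩ insert n Y = insert n (X ∩ Y) := by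
  ext a
  simp only [Finset.mem_inter, Finset.mem_insert]
  tauto

/-- Lemma A: structure of tight pairs. -/
lemma tight_pair (n : ℕ) (hn : 8 ≤ n) (F : Finset (Finset ℕ))
    (hF : FamilyOn n F) (hlc : LeftCompressed n F) (h3 : ThreeIntersecting F)
    (hnopair : ¬ ∃ A B : Finset ℕ, MinimalIn F A ∧ MinimalIn F B ∧
      n ∈ A ∩ B ∧ A ∪ B = ground n ∧
      ∃ i : ℕ, 1 ≤ i ∧ i < n - 1 ∧ A ∩ B = {i, n - 1, n})
    (X Y : Finset ℕ) (hX : insert n X ∈ F) (hY : insert n Y ∈ F)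
    (hnX : n ∉ X) (hnY : n ∉ Y) (hcard : (X ∩ Y).card = 2) :
    n - 1 ∈ X ∪ Y ∧ n - 1 ∉ X ∩ Y := by
  obtain ⟨A₀, hA₀sub, hA₀min⟩ := exists_minimal_subset F _ hX
  obtain ⟨B₀, hB₀sub, hB₀min⟩ := exists_minimal_subset F _ hY
  have hnXY : n ∉ X ∩ Y := fun h => hnX (Finset.mem_inter.1 h).1
  have hABeq : insert n X ∩ insert n Y = insert n (X ∩ Y) := insert_inter_insert' n X Y
  have hABcard : (insert n (X ∩ Y)).card = 3 := by
    rw [Finset.card_insert_of_notMem hnXY, hcard]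
  have hsub : A₀ ∩ B₀ ⊆ insert n (X ∩ Y) := by
    rw [← hABeq]; exact Finset.inter_subset_inter hA₀sub hB₀sub
  have hcard3 : 3 ≤ (A₀ ∩ B₀).card := h3 _ hA₀min.1 _ hB₀min.1
  have heq : A₀ ∩ B₀ = insert n (X ∩ Y) :=
    Finset.eq_of_subset_of_card_le hsub (by rw [hABcard]; exact hcard3)
  have hnAB : n ∈ A₀ ∩ B₀ := by rw [heq]; exact Finset.mem_insert_self n _
  have hnA₀ : n ∈ A₀ := (Finset.mem_inter.1 hnAB).1
  have hnB₀ : n ∈ B₀ := (Finset.mem_inter.1 hnAB).2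
  have hunion : A₀ ∪ B₀ = ground n := by
    apply Finset.Subset.antisymm
    · exact Finset.union_subset (hA₀sub.trans (hF _ hX)) (hB₀sub.trans (hF _ hY))
    · intro t ht
      by_contra htn
      obtain ⟨h1t, h2t⟩ := Finset.mem_Icc.1 ht
      have htA₀ : t ∉ A₀ := fun h => htn (Finset.mem_union_left _ h)
      have htB₀ : t ∉ B₀ := fun h => htn (Finset.mem_union_right _ h)
      have htnn : t ≠ n := fun h => htA₀ (h ▸ hnA₀)
      have hcomp := hlc A₀ hA₀min.1 t n h1t (by omega) le_rfl
      rw [compress, if_pos ⟨hnA₀, htA₀⟩] at hcomp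
      have h3' := h3 _ hcomp _ hB₀min.1
      have hsub2 : insert t (A₀.erase n) ∩ B₀ ⊆ X ∩ Y := by
        intro u hu
        obtain ⟨hu1, hu2⟩ := Finset.mem_inter.1 hu
        rcases Finset.mem_insert.1 hu1 with h | h
        · exact absurd (h ▸ hu2) htB₀
        · have hun : u ≠ n := (Finset.mem_erase.1 h).1
          have huA : u ∈ A₀ := (Finset.mem_erase.1 h).2
          have humem : u ∈ insert n (X ∩ Y) := by
            rw [← heq]; exact Finset.mem_inter.2 ⟨huA, hu2⟩
          rcases Finset.mem_insert.1 humem with h' | h'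
          · exact absurd h' hun
          · exact h'
      have hle := Finset.card_le_card hsub2
      omega
  have hm1 : n - 1 ∈ ground n := Finset.mem_Icc.2 ⟨by omega, by omega⟩
  have hmu : n - 1 ∈ A₀ ∪ B₀ := by rw [hunion]; exact hm1
  have hmXY : n - 1 ∈ X ∪ Y := by
    rcases Finset.mem_union.1 hmu with h | h
    · have h' := hA₀sub h
      rcases Finset.mem_insert.1 h' with h'' | h''
      · omega
      · exact Finset.mem_union_left _ h''
    · have h' := hB₀sub h
      rcases Finset.mem_insert.1 h' with h'' | h''
      · omega
      · exact Finset.mem_union_right _ h''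
  refine ⟨hmXY, ?_⟩
  intro hmem
  have hcarderase : ((X ∩ Y).erase (n - 1)).card = 1 := by
    rw [Finset.card_erase_of_mem hmem, hcard]
  obtain ⟨i, hi⟩ := Finset.card_eq_one.1 hcarderase
  have hiXY' : i ∈ (X ∩ Y).erase (n - 1) := by rw [hi]; exact Finset.mem_singleton_self i
  have hine : i ≠ n - 1 := (Finset.mem_erase.1 hiXY').1
  have hiXY : i ∈ X ∩ Y := (Finset.mem_erase.1 hiXY').2
  have hXYeq : X ∩ Y = {n - 1, i} := by
    have h1 := Finset.insert_erase hmem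
    rw [hi] at h1
    rw [← h1]
  have hiX : i ∈ X := (Finset.mem_inter.1 hiXY).1
  have hig : i ∈ ground n := hF _ hX (Finset.mem_insert_of_mem hiX)
  obtain ⟨h1i, h2i⟩ := Finset.mem_Icc.1 hig
  have hinn : i ≠ n := fun h => hnX (h ▸ hiX)
  exact hnopair ⟨A₀, B₀, hA₀min, hB₀min, hnAB, hunion, i, h1i, by omega,
    by rw [heq, hXYeq]; ext a; simp only [Finset.mem_insert, Finset.mem_singleton]; tauto⟩

/-- Lemma B: structure of empty triples. -/
lemma empty_triple (n : ℕ) (hn : 8 ≤ n) (F : Finset (Finset ℕ))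
    (hlc : LeftCompressed n F) (h3w : ThreeWiseIntersecting F)
    (X Y Z : Finset ℕ) (hX : insert n X ∈ F) (hY : insert n Y ∈ F) (hZ : insert n Z ∈ F)
    (hnX : n ∉ X) (hmX : n - 1 ∉ X) (hXYZ : X ∩ Y ∩ Z = ∅) :
    n - 1 ∈ Y ∩ Z := by
  by_contra hmYZ
  have hcond : n ∈ insert n X ∧ n - 1 ∉ insert n X := by
    refine ⟨Finset.mem_insert_self n X, ?_⟩
    simp only [Finset.mem_insert]
    push_neg
    exact ⟨by omega, hmX⟩
  have hcomp := hlc _ hX (n - 1) n (by omega) (by omega) le_rfl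
  rw [compress, if_pos hcond, Finset.erase_insert hnX] at hcomp
  obtain ⟨u, hu⟩ := h3w _ hcomp _ hY _ hZ
  simp only [Finset.mem_inter, Finset.mem_insert] at hu
  obtain ⟨⟨hu1, hu2⟩, hu3⟩ := hu
  rcases hu1 with h | h
  · subst h
    rcases hu2 with h2 | h2
    · omega
    rcases hu3 with h3 | h3
    · omega
    exact hmYZ (Finset.mem_inter.2 ⟨h2, h3⟩)
  · have hun : u ≠ n := fun he => hnX (he ▸ h)
    rcases hu2 with h2 | h2
    · exact hun h2
    rcases hu3 with h3 | h3
    · exact hun h3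
    have : u ∈ X ∩ Y ∩ Z := by
      simp only [Finset.mem_inter]; exact ⟨⟨h, h2⟩, h3⟩
    rw [hXYZ] at this
    exact absurd this (Finset.notMem_empty u)
/-- if a left-compressed up-set `F ⊆ 𝒫([n])` (both 3-wise intersecting
and 3-intersecting) has no `(i, n-1)`-sharp pair among its minimal elements, then
`|F| ≤ 2·M(n-1)`, where `M(n-1)` is the maximum size of a family of subsets of `[n-1]`
that is both 3-wise intersecting and 3-intersecting. -/
theorem stmt13 (n : ℕ) (hn : 8 ≤ n) (F : Finset (Finset ℕ))
    (hF : FamilyOn n F) (hup : UpSetOn n F) (hlc : LeftCompressed n F)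
    (h3w : ThreeWiseIntersecting F) (h3 : ThreeIntersecting F)
    (hnopair : ¬ ∃ A B : Finset ℕ, MinimalIn F A ∧ MinimalIn F B ∧
      n ∈ A ∩ B ∧ A ∪ B = ground n ∧
      ∃ i : ℕ, 1 ≤ i ∧ i < n - 1 ∧ A ∩ B = {i, n - 1, n}) :
    F.card ≤ 2 * sSup {k : ℕ | ∃ G : Finset (Finset ℕ),
      FamilyOn (n - 1) G ∧ ThreeWiseIntersecting G ∧ ThreeIntersecting G ∧
      G.card = k} := by
  classical
  set S : Set ℕ := {k : ℕ | ∃ G : Finset (Finset ℕ),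
      FamilyOn (n - 1) G ∧ ThreeWiseIntersecting G ∧ ThreeIntersecting G ∧
      G.card = k} with hS
  have hnground : n ∈ ground n := Finset.mem_Icc.2 ⟨by omega, le_rfl⟩
  set FH := F.filter (fun A => n ∈ A) with hFH
  set Gn := F.filter (fun A => ¬ n ∈ A) with hGnDef
  set Hn := FH.image (fun A => A.erase n) with hHnDef
  -- basic membership facts
  have hGmem : ∀ X ∈ Gn, X ∈ F ∧ n ∉ X := fun X hX => Finset.mem_filter.1 hX
  have hHlift : ∀ X ∈ Hn, insert n X ∈ F ∧ n ∉ X := by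
    intro X hX
    obtain ⟨A, hA, rfl⟩ := Finset.mem_image.1 hX
    obtain ⟨hAF, hnA⟩ := Finset.mem_filter.1 hA
    rw [Finset.insert_erase hnA]
    exact ⟨hAF, Finset.notMem_erase n A⟩
  have hHmem : ∀ X : Finset ℕ, insert n X ∈ F → n ∉ X → X ∈ Hn := by
    intro X h1 h2
    refine Finset.mem_image.2 ⟨insert n X,
      Finset.mem_filter.2 ⟨h1, Finset.mem_insert_self _ _⟩, ?_⟩
    rw [Finset.erase_insert h2]
  have hHfam : ∀ X ∈ Hn, X ⊆ ground (n - 1) := by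
    intro X hX x hx
    obtain ⟨h1, h2⟩ := hHlift X hX
    have hxg : x ∈ ground n := hF _ h1 (Finset.mem_insert_of_mem hx)
    obtain ⟨ha, hb⟩ := Finset.mem_Icc.1 hxg
    have : x ≠ n := fun he => h2 (he ▸ hx)
    exact Finset.mem_Icc.2 ⟨ha, by omega⟩
  have hGfam : ∀ X ∈ Gn, X ⊆ ground (n - 1) := by
    intro X hX x hx
    obtain ⟨h1, h2⟩ := hGmem X hX
    have hxg : x ∈ ground n := hF _ h1 hx
    obtain ⟨ha, hb⟩ := Finset.mem_Icc.1 hxg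
    have : x ≠ n := fun he => h2 (he ▸ hx)
    exact Finset.mem_Icc.2 ⟨ha, by omega⟩
  -- the transfer set T
  set T := Hn.filter (fun X => n - 1 ∉ X ∧
      ((∃ Y ∈ Hn, (X ∩ Y).card = 2) ∨ (∃ Y ∈ Hn, ∃ Z ∈ Hn, X ∩ Y ∩ Z = ∅))) with hTDef
  have hTsub : T ⊆ Hn := Finset.filter_subset _ _
  have hTnotF : ∀ X ∈ T, X ∉ F := by
    intro X hXT hXF
    obtain ⟨hXH, hmX, hcase⟩ := Finset.mem_filter.1 hXT
    have hnX : n ∉ X := (hHlift X hXH).2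
    rcases hcase with ⟨Y, hYH, hc⟩ | ⟨Y, hYH, Z, hZH, hc⟩
    · have h3' := h3 X hXF _ (hHlift Y hYH).1
      rw [inter_insert_right' n X Y hnX, hc] at h3'
      omega
    · obtain ⟨u, hu⟩ := h3w X hXF _ (hHlift Y hYH).1 _ (hHlift Z hZH).1
      simp only [Finset.mem_inter, Finset.mem_insert] at hu
      obtain ⟨⟨hu1, hu2⟩, hu3⟩ := hu
      have hun : u ≠ n := fun he => hnX (he ▸ hu1)
      rcases hu2 with h2 | h2
      · exact hun h2
      rcases hu3 with h3' | h3'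
      · exact hun h3'
      have : u ∈ X ∩ Y ∩ Z := by
        simp only [Finset.mem_inter]; exact ⟨⟨hu1, h2⟩, h3'⟩
      rw [hc] at this
      exact absurd this (Finset.notMem_empty u)
  set K := Gn ∪ T with hKDef
  have hKlift : ∀ V ∈ K, insert n V ∈ F ∧ n ∉ V := by
    intro V hV
    rcases Finset.mem_union.1 hV with h | h
    · obtain ⟨h1, h2⟩ := hGmem V h
      refine ⟨hup V h1 (insert n V) (Finset.subset_insert _ _) ?_, h2⟩
      exact Finset.insert_subset hnground (hF _ h1)
    · exact hHlift V (hTsub h)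
  -- K is a good family on [n-1]
  have hKfam : FamilyOn (n - 1) K := by
    intro V hV
    rcases Finset.mem_union.1 hV with h | h
    · exact hGfam V h
    · exact hHfam V (hTsub h)
  have hK3 : ThreeIntersecting K := by
    intro X hX Y hY
    obtain ⟨hlX, hnX⟩ := hKlift X hX
    obtain ⟨hlY, hnY⟩ := hKlift Y hY
    by_cases hXG : X ∈ Gn
    · have h3' := h3 X (hGmem X hXG).1 _ hlY
      rwa [inter_insert_right' n X Y hnX] at h3'
    · by_cases hYG : Y ∈ Gn
      · have h3' := h3 _ hlX Y (hGmem Y hYG).1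
        rwa [insert_inter_left' n X Y hnY] at h3'
      · have hXT : X ∈ T := (Finset.mem_union.1 hX).resolve_left hXG
        have hYT : Y ∈ T := (Finset.mem_union.1 hY).resolve_left hYG
        have hmX : n - 1 ∉ X := ((Finset.mem_filter.1 hXT).2).1
        have hmY : n - 1 ∉ Y := ((Finset.mem_filter.1 hYT).2).1
        have h3' := h3 _ hlX _ hlY
        rw [insert_inter_insert' n X Y,
          Finset.card_insert_of_notMem (fun h => hnX (Finset.mem_inter.1 h).1)] at h3'
        by_contra hlt
        have hc2 : (X ∩ Y).card = 2 := by omega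
        obtain ⟨hmem, -⟩ := tight_pair n hn F hF hlc h3 hnopair X Y hlX hlY hnX hnY hc2
        rcases Finset.mem_union.1 hmem with h | h
        · exact hmX h
        · exact hmY h
  have hK3w : ThreeWiseIntersecting K := by
    intro X hX Y hY Z hZ
    obtain ⟨hlX, hnX⟩ := hKlift X hX
    obtain ⟨hlY, hnY⟩ := hKlift Y hY
    obtain ⟨hlZ, hnZ⟩ := hKlift Z hZ
    by_cases hXG : X ∈ Gn
    · obtain ⟨u, hu⟩ := h3w X (hGmem X hXG).1 _ hlY _ hlZ
      simp only [Finset.mem_inter, Finset.mem_insert] at hu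
      obtain ⟨⟨h1, h2⟩, h3'⟩ := hu
      have hun : u ≠ n := fun he => hnX (he ▸ h1)
      refine ⟨u, ?_⟩
      simp only [Finset.mem_inter]
      exact ⟨⟨h1, h2.resolve_left hun⟩, h3'.resolve_left hun⟩
    · by_cases hYG : Y ∈ Gn
      · obtain ⟨u, hu⟩ := h3w _ hlX Y (hGmem Y hYG).1 _ hlZ
        simp only [Finset.mem_inter, Finset.mem_insert] at hu
        obtain ⟨⟨h1, h2⟩, h3'⟩ := hu
        have hun : u ≠ n := fun he => hnY (he ▸ h2)
        refine ⟨u, ?_⟩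
        simp only [Finset.mem_inter]
        exact ⟨⟨h1.resolve_left hun, h2⟩, h3'.resolve_left hun⟩
      · by_cases hZG : Z ∈ Gn
        · obtain ⟨u, hu⟩ := h3w _ hlX _ hlY Z (hGmem Z hZG).1
          simp only [Finset.mem_inter, Finset.mem_insert] at hu
          obtain ⟨⟨h1, h2⟩, h3'⟩ := hu
          have hun : u ≠ n := fun he => hnZ (he ▸ h3')
          refine ⟨u, ?_⟩
          simp only [Finset.mem_inter]
          exact ⟨⟨h1.resolve_left hun, h2.resolve_left hun⟩, h3'⟩
        · -- all three in T
          have hXT : X ∈ T := (Finset.mem_union.1 hX).resolve_left hXG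
          have hYT : Y ∈ T := (Finset.mem_union.1 hY).resolve_left hYG
          have hZT : Z ∈ T := (Finset.mem_union.1 hZ).resolve_left hZG
          have hmX : n - 1 ∉ X := ((Finset.mem_filter.1 hXT).2).1
          have hmY : n - 1 ∉ Y := ((Finset.mem_filter.1 hYT).2).1
          by_contra hne
          rw [Finset.not_nonempty_iff_eq_empty] at hne
          have := empty_triple n hn F hlc h3w X Y Z hlX hlY hlZ hnX hmX hne
          exact hmY (Finset.mem_inter.1 this).1
  -- H \ T is a good family on [n-1]
  have hH'fam : FamilyOn (n - 1) (Hn \ T) := by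
    intro X hX
    exact hHfam X (Finset.mem_sdiff.1 hX).1
  have hH'3 : ThreeIntersecting (Hn \ T) := by
    intro X hX Y hY
    obtain ⟨hXH, hXnT⟩ := Finset.mem_sdiff.1 hX
    obtain ⟨hYH, hYnT⟩ := Finset.mem_sdiff.1 hY
    obtain ⟨hlX, hnX⟩ := hHlift X hXH
    obtain ⟨hlY, hnY⟩ := hHlift Y hYH
    have h3' := h3 _ hlX _ hlY
    rw [insert_inter_insert' n X Y,
      Finset.card_insert_of_notMem (fun h => hnX (Finset.mem_inter.1 h).1)] at h3'
    by_contra hlt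
    have hc2 : (X ∩ Y).card = 2 := by omega
    obtain ⟨-, hni⟩ := tight_pair n hn F hF hlc h3 hnopair X Y hlX hlY hnX hnY hc2
    have : n - 1 ∉ X ∨ n - 1 ∉ Y := by
      by_contra hcon
      push_neg at hcon
      exact hni (Finset.mem_inter.2 ⟨hcon.1, hcon.2⟩)
    rcases this with h | h
    · exact hXnT (Finset.mem_filter.2 ⟨hXH, h, Or.inl ⟨Y, hYH, hc2⟩⟩)
    · refine hYnT (Finset.mem_filter.2 ⟨hYH, h, Or.inl ⟨X, hXH, ?_⟩⟩)
      rw [Finset.inter_comm]; exact hc2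
  have hH'3w : ThreeWiseIntersecting (Hn \ T) := by
    intro X hX Y hY Z hZ
    obtain ⟨hXH, hXnT⟩ := Finset.mem_sdiff.1 hX
    obtain ⟨hYH, hYnT⟩ := Finset.mem_sdiff.1 hY
    obtain ⟨hZH, hZnT⟩ := Finset.mem_sdiff.1 hZ
    by_contra hne
    rw [Finset.not_nonempty_iff_eq_empty] at hne
    have hnotall : ¬ (n - 1 ∈ X ∧ n - 1 ∈ Y ∧ n - 1 ∈ Z) := by
      rintro ⟨h1, h2, h3'⟩
      have : n - 1 ∈ X ∩ Y ∩ Z := by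
        simp only [Finset.mem_inter]; exact ⟨⟨h1, h2⟩, h3'⟩
      rw [hne] at this
      exact absurd this (Finset.notMem_empty _)
    push_neg at hnotall
    by_cases h1 : n - 1 ∈ X
    · by_cases h2 : n - 1 ∈ Y
      · have h3'' := hnotall h1 h2
        refine hZnT (Finset.mem_filter.2 ⟨hZH, h3'', Or.inr ⟨X, hXH, Y, hYH, ?_⟩⟩)
        ext a
        simp only [Finset.mem_inter, Finset.notMem_empty, iff_false]
        rintro ⟨⟨ha1, ha2⟩, ha3⟩
        have : a ∈ X ∩ Y ∩ Z := by
          simp only [Finset.mem_inter]; exact ⟨⟨ha2, ha3⟩, ha1⟩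
        rw [hne] at this
        exact absurd this (Finset.notMem_empty a)
      · refine hYnT (Finset.mem_filter.2 ⟨hYH, h2, Or.inr ⟨X, hXH, Z, hZH, ?_⟩⟩)
        rw [Finset.inter_comm Y X]
        exact hne
    · exact hXnT (Finset.mem_filter.2 ⟨hXH, h1, Or.inr ⟨Y, hYH, Z, hZH, hne⟩⟩)
  -- G (as a standalone family) is good: we only need it inside K, done above.
  -- Bounding by the supremum
  have hSbdd : BddAbove S := by
    refine ⟨2 ^ (ground (n - 1)).card, ?_⟩
    rintro k hk
    obtain ⟨G', hfam, -, -, rfl⟩ := hk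
    have hsub : G' ⊆ (ground (n - 1)).powerset :=
      fun A hA => Finset.mem_powerset.2 (hfam A hA)
    calc G'.card ≤ ((ground (n - 1)).powerset).card := Finset.card_le_card hsub
      _ = 2 ^ (ground (n - 1)).card := Finset.card_powerset _
  have hKle : K.card ≤ sSup S :=
    le_csSup hSbdd ⟨K, hKfam, hK3w, hK3, rfl⟩
  have hH'le : (Hn \ T).card ≤ sSup S :=
    le_csSup hSbdd ⟨Hn \ T, hH'fam, hH'3w, hH'3, rfl⟩
  -- counting
  have hc1 : (F.filter (fun A => n ∈ A)).card + (F.filter (fun A => ¬ n ∈ A)).card = F.card :=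
    Finset.card_filter_add_card_filter_not _
  rw [← hFH, ← hGnDef] at hc1
  have hc2 : Hn.card = FH.card := by
    apply Finset.card_image_of_injOn
    intro A hA B hB hAB
    have hnA : n ∈ A := (Finset.mem_filter.1 hA).2
    have hnB : n ∈ B := (Finset.mem_filter.1 hB).2
    have hAB' : A.erase n = B.erase n := hAB
    rw [← Finset.insert_erase hnA, hAB', Finset.insert_erase hnB]
  have hc3 : (Hn \ T).card + T.card = Hn.card :=
    Finset.card_sdiff_add_card_eq_card hTsub
  have hdisj : Disjoint Gn T := by
    rw [Finset.disjoint_left]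
    intro X hXG hXT
    exact hTnotF X hXT (hGmem X hXG).1
  have hc4 : K.card = Gn.card + T.card := Finset.card_union_of_disjoint hdisj
  omega
end

section
/- Let n ≥ 8 and let 𝓕 be a left-compressed up-set of subsets of [n] that is both 3-wise intersecting and 3-intersecting. Suppose there exist minimal elements A, B of 𝓕 with n ∈ A ∩ B, A ∪ B = [n], and A ∩ B = {i, n−1, n} for some i < n−1. Then 𝓕 is almost-trivial: every C ∈ 𝓕 with |C| ≤ n−3 contains the element 1. -/
open Finset

private lemma shift {n : ℕ} {F : Finset (Finset ℕ)} (hlc : LeftCompressed n F)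
    {A : Finset ℕ} (hA : A ∈ F) {m j : ℕ} (hm : 1 ≤ m) (hmj : m < j) (hjn : j ≤ n)
    (hjA : j ∈ A) (hmA : m ∉ A) : insert m (A.erase j) ∈ F := by
  have h := hlc A hA m j hm hmj hjn
  rwa [compress, if_pos ⟨hjA, hmA⟩] at h


/-- if a left-compressed up-set `F ⊆ 𝒫([n])` (both 3-wise intersecting
and 3-intersecting) has an `(i, n-1)`-sharp pair among its minimal elements, then `F`
is almost-trivial: every `C ∈ F` with `|C| ≤ n - 3` contains `1`. -/
theorem stmt14 (n : ℕ) (hn : 8 ≤ n) (F : Finset (Finset ℕ))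
    (hF : FamilyOn n F) (hup : UpSetOn n F) (hlc : LeftCompressed n F)
    (h3w : ThreeWiseIntersecting F) (h3 : ThreeIntersecting F)
    (hpair : ∃ A B : Finset ℕ, MinimalIn F A ∧ MinimalIn F B ∧
      n ∈ A ∩ B ∧ A ∪ B = ground n ∧
      ∃ i : ℕ, 1 ≤ i ∧ i < n - 1 ∧ A ∩ B = {i, n - 1, n}) :
    ∀ C ∈ F, C.card ≤ n - 3 → 1 ∈ C := by
  classical
  obtain ⟨A, B, ⟨hA, -⟩, ⟨hB, -⟩, -, hUnion, i, hi1, hiN, hInt⟩ := hpair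
  have hABmem : ∀ x, x ∈ A → x ∈ B → x = i ∨ x = n - 1 ∨ x = n := by
    intro x hxA hxB
    have hx : x ∈ A ∩ B := Finset.mem_inter.2 ⟨hxA, hxB⟩
    rw [hInt] at hx; simpa using hx
  have hiAB : i ∈ A ∩ B := by rw [hInt]; simp
  have hn1AB : n - 1 ∈ A ∩ B := by rw [hInt]; simp
  have hnAB : n ∈ A ∩ B := by rw [hInt]; simp
  obtain ⟨hiA, hiB⟩ := Finset.mem_inter.1 hiAB
  obtain ⟨hn1A, hn1B⟩ := Finset.mem_inter.1 hn1AB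
  obtain ⟨hnA, hnB⟩ := Finset.mem_inter.1 hnAB
  -- key lemma : every small member of F contains i
  have key : ∀ D ∈ F, D.card ≤ n - 3 → i ∈ D := by
    intro D hD hDc
    by_contra hiD
    set U : Finset ℕ := (ground n) \ {i, n - 1, n} with hU
    have hUmem : ∀ j ∈ U, 1 ≤ j ∧ j ≤ n ∧ j ≠ i ∧ j ≠ n - 1 ∧ j ≠ n := by
      intro j hj
      rw [hU, Finset.mem_sdiff] at hj
      obtain ⟨hj1, hj2⟩ := hj
      rw [ground, Finset.mem_Icc] at hj1
      simp only [Finset.mem_insert, Finset.mem_singleton] at hj2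
      push_neg at hj2
      exact ⟨hj1.1, hj1.2, hj2.1, hj2.2.1, hj2.2.2⟩
    -- core : one-sided shift facts
    have core : ∀ X Y : Finset ℕ, X ∈ F → Y ∈ F → X ∩ Y = {i, n - 1, n} →
        ∀ j, j ∉ X → 1 ≤ j → j ≤ n → j ≠ n - 1 → j ≠ n →
          ((n - 1 ∈ D ∨ j ∈ D) ∧ (n ∈ D ∨ j ∈ D)) := by
      intro X Y hX hY hXY j hjX hj1 hjn hjn1 hjn'
      have hmem : ∀ x, x ∈ X → x ∈ Y → x = i ∨ x = n - 1 ∨ x = n := by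
        intro x h1 h2
        have hx : x ∈ X ∩ Y := Finset.mem_inter.2 ⟨h1, h2⟩
        rw [hXY] at hx; simpa using hx
      have hnX : n ∈ X := by
        have : n ∈ X ∩ Y := by rw [hXY]; simp
        exact (Finset.mem_inter.1 this).1
      have hn1X : n - 1 ∈ X := by
        have : n - 1 ∈ X ∩ Y := by rw [hXY]; simp
        exact (Finset.mem_inter.1 this).1
      constructor
      · have hE : insert j (X.erase n) ∈ F := shift hlc hX hj1 (by omega) le_rfl hnX hjX
        obtain ⟨x, hx⟩ := h3w _ hE Y hY D hD
        simp only [Finset.mem_inter, Finset.mem_insert, Finset.mem_erase] at hx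
        obtain ⟨⟨h1, h2⟩, hxD⟩ := hx
        rcases h1 with rfl | ⟨hxn, hxX⟩
        · exact Or.inr hxD
        · rcases hmem x hxX h2 with rfl | rfl | rfl
          · exact absurd hxD hiD
          · exact Or.inl hxD
          · exact absurd rfl hxn
      · have hE : insert j (X.erase (n - 1)) ∈ F :=
          shift hlc hX hj1 (by omega) (by omega) hn1X hjX
        obtain ⟨x, hx⟩ := h3w _ hE Y hY D hD
        simp only [Finset.mem_inter, Finset.mem_insert, Finset.mem_erase] at hx
        obtain ⟨⟨h1, h2⟩, hxD⟩ := hx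
        rcases h1 with rfl | ⟨hxn, hxX⟩
        · exact Or.inr hxD
        · rcases hmem x hxX h2 with rfl | rfl | rfl
          · exact absurd hxD hiD
          · exact absurd rfl hxn
          · exact Or.inl hxD
    -- core2 : two shifts on the same side
    have core2 : ∀ X Y : Finset ℕ, X ∈ F → Y ∈ F → X ∩ Y = {i, n - 1, n} →
        ∀ j j', j ∉ X → j' ∉ X → j ≠ j' →
          1 ≤ j → j ≤ n → j ≠ n - 1 → j ≠ n →
          1 ≤ j' → j' ≤ n → j' ≠ n - 1 → j' ≠ n →
          j ∈ D ∨ j' ∈ D := by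
      intro X Y hX hY hXY j j' hjX hj'X hjj' hj1 hjn hjn1 hjn' hj'1 hj'n hj'n1 hj'n'
      have hmem : ∀ x, x ∈ X → x ∈ Y → x = i ∨ x = n - 1 ∨ x = n := by
        intro x h1 h2
        have hx : x ∈ X ∩ Y := Finset.mem_inter.2 ⟨h1, h2⟩
        rw [hXY] at hx; simpa using hx
      have hnX : n ∈ X := by
        have : n ∈ X ∩ Y := by rw [hXY]; simp
        exact (Finset.mem_inter.1 this).1
      have hn1X : n - 1 ∈ X := by
        have : n - 1 ∈ X ∩ Y := by rw [hXY]; simp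
        exact (Finset.mem_inter.1 this).1
      have hE1 : insert j (X.erase n) ∈ F := shift hlc hX hj1 (by omega) le_rfl hnX hjX
      have hE2 : insert j' ((insert j (X.erase n)).erase (n - 1)) ∈ F := by
        refine shift hlc hE1 hj'1 (by omega) (by omega) ?_ ?_
        · simp only [Finset.mem_insert, Finset.mem_erase]
          exact Or.inr ⟨by omega, hn1X⟩
        · intro h
          simp only [Finset.mem_insert, Finset.mem_erase] at h
          rcases h with rfl | ⟨-, h2⟩
          · exact hjj' rfl
          · exact hj'X h2
      obtain ⟨x, hx⟩ := h3w _ hE2 Y hY D hD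
      simp only [Finset.mem_inter, Finset.mem_insert, Finset.mem_erase] at hx
      obtain ⟨⟨h1, h2⟩, hxD⟩ := hx
      rcases h1 with rfl | ⟨hxn1, h1⟩
      · exact Or.inr hxD
      rcases h1 with rfl | ⟨hxn, hxX⟩
      · exact Or.inl hxD
      rcases hmem x hxX h2 with rfl | rfl | rfl
      · exact absurd hxD hiD
      · exact absurd rfl hxn1
      · exact absurd rfl hxn
    -- core3 : cross shift
    have core3 : ∀ j j', j ∉ A → j' ∉ B →
        1 ≤ j → j ≤ n → j ≠ n - 1 → j ≠ n →
        1 ≤ j' → j' ≤ n → j' ≠ n - 1 → j' ≠ n →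
        j ∈ D ∨ j' ∈ D := by
      intro j j' hjA hj'B hj1 hjn hjn1 hjn' hj'1 hj'n hj'n1 hj'n'
      have hE : insert j (A.erase n) ∈ F := shift hlc hA hj1 (by omega) le_rfl hnA hjA
      have hE' : insert j' (B.erase (n - 1)) ∈ F :=
        shift hlc hB hj'1 (by omega) (by omega) hn1B hj'B
      obtain ⟨x, hx⟩ := h3w _ hE _ hE' D hD
      simp only [Finset.mem_inter, Finset.mem_insert, Finset.mem_erase] at hx
      obtain ⟨⟨h1, h2⟩, hxD⟩ := hx
      rcases h1 with rfl | ⟨hxn, hxA⟩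
      · exact Or.inl hxD
      rcases h2 with rfl | ⟨hxn1, hxB⟩
      · exact Or.inr hxD
      rcases hABmem x hxA hxB with rfl | rfl | rfl
      · exact absurd hxD hiD
      · exact absurd rfl hxn1
      · exact absurd rfl hxn
    -- G1 and G2
    have hInt' : B ∩ A = {i, n - 1, n} := by rw [Finset.inter_comm]; exact hInt
    have hABground : ∀ j, 1 ≤ j → j ≤ n → j ∈ A ∨ j ∈ B := by
      intro j h1 h2
      have : j ∈ A ∪ B := by rw [hUnion, ground, Finset.mem_Icc]; exact ⟨h1, h2⟩
      exact Finset.mem_union.1 this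
    have G1 : ∀ j ∈ U, (n - 1 ∈ D ∨ j ∈ D) ∧ (n ∈ D ∨ j ∈ D) := by
      intro j hj
      obtain ⟨hj1, hjn, hji, hjn1, hjn'⟩ := hUmem j hj
      by_cases hjA : j ∈ A
      · have hjB : j ∉ B := by
          intro hjB
          rcases hABmem j hjA hjB with h | h | h <;> [exact hji h; exact hjn1 h; exact hjn' h]
        exact core B A hB hA hInt' j hjB hj1 hjn hjn1 hjn'
      · exact core A B hA hB hInt j hjA hj1 hjn hjn1 hjn'
    have G2 : ∀ j ∈ U, ∀ j' ∈ U, j ≠ j' → j ∈ D ∨ j' ∈ D := by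
      intro j hj j' hj' hjj'
      obtain ⟨hj1, hjn, hji, hjn1, hjn'⟩ := hUmem j hj
      obtain ⟨hj'1, hj'n, hj'i, hj'n1, hj'n'⟩ := hUmem j' hj'
      have notB : ∀ x, 1 ≤ x → x ≤ n → x ≠ i → x ≠ n - 1 → x ≠ n → x ∈ A → x ∉ B := by
        intro x h1 h2 h3 h4 h5 hxA hxB
        rcases hABmem x hxA hxB with h | h | h <;> [exact h3 h; exact h4 h; exact h5 h]
      by_cases hjA : j ∈ A
      · have hjB : j ∉ B := notB j hj1 hjn hji hjn1 hjn' hjA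
        by_cases hj'A : j' ∈ A
        · have hj'B : j' ∉ B := notB j' hj'1 hj'n hj'i hj'n1 hj'n' hj'A
          exact core2 B A hB hA hInt' j j' hjB hj'B hjj' hj1 hjn hjn1 hjn' hj'1 hj'n hj'n1 hj'n'
        · exact (core3 j' j hj'A hjB hj'1 hj'n hj'n1 hj'n' hj1 hjn hjn1 hjn').symm
      · by_cases hj'B : j' ∈ B
        · have hj'A2 : j' ∉ A := fun h => notB j' hj'1 hj'n hj'i hj'n1 hj'n' h hj'B
          exact core2 A B hA hB hInt j j' hjA hj'A2 hjj' hj1 hjn hjn1 hjn' hj'1 hj'n hj'n1 hj'n'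
        · exact core3 j j' hjA hj'B hj1 hjn hjn1 hjn' hj'1 hj'n hj'n1 hj'n'
    -- F0
    have hF0 : n - 1 ∈ D ∨ n ∈ D := by
      obtain ⟨x, hx⟩ := h3w A hA B hB D hD
      rw [Finset.mem_inter, hInt] at hx
      obtain ⟨hx1, hxD⟩ := hx
      simp only [Finset.mem_insert, Finset.mem_singleton] at hx1
      rcases hx1 with rfl | rfl | rfl
      · exact absurd hxD hiD
      · exact Or.inl hxD
      · exact Or.inr hxD
    -- cardinalities
    have hTsub : ({i, n - 1, n} : Finset ℕ) ⊆ ground n := by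
      intro x hx
      simp only [Finset.mem_insert, Finset.mem_singleton] at hx
      rw [ground, Finset.mem_Icc]
      rcases hx with rfl | rfl | rfl <;> omega
    have hTcard : ({i, n - 1, n} : Finset ℕ).card = 3 := by
      rw [Finset.card_insert_of_notMem (by simp; omega),
        Finset.card_insert_of_notMem (by simp; omega), Finset.card_singleton]
    have hgcard : (ground n).card = n := by
      rw [ground, Nat.card_Icc]; omega
    have hUcard : U.card = n - 3 := by
      rw [hU, Finset.card_sdiff_of_subset hTsub, hgcard, hTcard]
    have hnU : n ∉ U := by
      rw [hU, Finset.mem_sdiff]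
      push_neg
      intro _
      simp
    have hn1U : n - 1 ∉ U := by
      rw [hU, Finset.mem_sdiff]
      push_neg
      intro _
      simp
    by_cases hn1D : n - 1 ∈ D
    · by_cases hnD : n ∈ D
      · -- |U \ D| ≤ 1
        have hsd : (U \ D).card ≤ 1 := by
          by_contra h
          push_neg at h
          obtain ⟨x, hx, y, hy, hxy⟩ := Finset.one_lt_card.1 h
          have hx' := Finset.mem_sdiff.1 hx
          have hy' := Finset.mem_sdiff.1 hy
          rcases G2 x hx'.1 y hy'.1 hxy with h' | h'
          · exact hx'.2 h'
          · exact hy'.2 h'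
        have h1 : (U ∩ D).card + (U \ D).card = U.card :=
          Finset.card_inter_add_card_sdiff U D
        have hsub : insert (n - 1) (insert n (U ∩ D)) ⊆ D := by
          intro x hx
          simp only [Finset.mem_insert] at hx
          rcases hx with rfl | rfl | hx
          · exact hn1D
          · exact hnD
          · exact (Finset.mem_inter.1 hx).2
        have hc1 : n ∉ U ∩ D := fun h => hnU (Finset.mem_inter.1 h).1
        have hc2 : n - 1 ∉ insert n (U ∩ D) := by
          simp only [Finset.mem_insert]
          push_neg
          exact ⟨by omega, fun h => hn1U (Finset.mem_inter.1 h).1⟩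
        have hcard := Finset.card_le_card hsub
        rw [Finset.card_insert_of_notMem hc2, Finset.card_insert_of_notMem hc1] at hcard
        omega
      · -- n ∉ D : then U ⊆ D and n-1 ∈ D
        have hsub : insert (n - 1) U ⊆ D := by
          intro x hx
          simp only [Finset.mem_insert] at hx
          rcases hx with rfl | hx
          · exact hn1D
          · rcases (G1 x hx).2 with h | h
            · exact absurd h hnD
            · exact h
        have hcard := Finset.card_le_card hsub
        rw [Finset.card_insert_of_notMem hn1U] at hcard
        omega
    · -- n-1 ∉ D : then U ⊆ D and n ∈ D
      have hnD : n ∈ D := by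
        rcases hF0 with h | h
        · exact absurd h hn1D
        · exact h
      have hsub : insert n U ⊆ D := by
        intro x hx
        simp only [Finset.mem_insert] at hx
        rcases hx with rfl | hx
        · exact hnD
        · rcases (G1 x hx).1 with h | h
          · exact absurd h hn1D
          · exact h
      have hcard := Finset.card_le_card hsub
      rw [Finset.card_insert_of_notMem hnU] at hcard
      omega
  -- final argument
  intro C hC hCc
  by_contra h1C
  have hiC : i ∈ C := key C hC hCc
  have hi2 : 1 < i := by
    rcases Nat.lt_or_ge 1 i with h | h
    · exact h
    · exfalso
      have : i = 1 := by omega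
      exact h1C (this ▸ hiC)
  have hC' : insert 1 (C.erase i) ∈ F := shift hlc hC le_rfl hi2 (by omega) hiC h1C
  have h1ne : (1 : ℕ) ∉ C.erase i := fun h => h1C (Finset.mem_of_mem_erase h)
  have hpos : 0 < C.card := Finset.card_pos.2 ⟨i, hiC⟩
  have hcard' : (insert 1 (C.erase i)).card = C.card := by
    rw [Finset.card_insert_of_notMem h1ne, Finset.card_erase_of_mem hiC]
    omega
  have hiC' : i ∈ insert 1 (C.erase i) := key _ hC' (by rw [hcard']; exact hCc)
  simp only [Finset.mem_insert, Finset.mem_erase] at hiC'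
  rcases hiC' with h | h
  · omega
  · exact h.1 rfl
end

section
/- Let n ≥ 7 be odd and let 𝓕 be a family of subsets of [n] that is both 3-wise intersecting and 3-intersecting and is almost-trivial (every A ∈ 𝓕 with |A| ≤ n−3 contains 1). Then |𝓕| ≤ |𝓕ₙ|, with equality if and only if 𝓕 = 𝓕ₙ. -/
open Finset

namespace Stmt15

open scoped FinsetFamily

def TInt (t : ℕ) (F : Finset (Finset ℕ)) : Prop := ∀ A ∈ F, ∀ B ∈ F, t ≤ (A ∩ B).card

def Unif (u : ℕ) (F : Finset (Finset ℕ)) : Prop := ∀ A ∈ F, A.card = u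

def ShiftedIn (G : Finset ℕ) (F : Finset (Finset ℕ)) : Prop :=
  ∀ A ∈ F, ∀ i ∈ G, ∀ j ∈ G, i < j → compress i j A ∈ F

def fmeas (F : Finset (Finset ℕ)) : ℕ := ∑ A ∈ F, ∑ x ∈ A, x

lemma compress_of_pos {i j : ℕ} {A : Finset ℕ} (h : j ∈ A ∧ i ∉ A) :
    compress i j A = insert i (A.erase j) := if_pos h

lemma compress_of_neg {i j : ℕ} {A : Finset ℕ} (h : ¬(j ∈ A ∧ i ∉ A)) :
    compress i j A = A := if_neg h

lemma not_mem_erase_of_not_mem {i j : ℕ} {A : Finset ℕ} (h : i ∉ A) : i ∉ A.erase j :=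
  fun hx => h (mem_of_mem_erase hx)

lemma compress_card (i j : ℕ) (A : Finset ℕ) : (compress i j A).card = A.card := by
  unfold compress; split_ifs with h
  · rw [card_insert_of_notMem (not_mem_erase_of_not_mem h.2), card_erase_of_mem h.1]
    have : 0 < A.card := card_pos.2 ⟨j, h.1⟩
    omega
  · rfl

lemma compress_subset {i j : ℕ} (A : Finset ℕ) : compress i j A ⊆ insert i A := by
  unfold compress; split_ifs with h
  · exact insert_subset_insert _ (erase_subset _ _)
  · exact subset_insert _ _

lemma uv_compress_eq {i j : ℕ} (hij : i ≠ j) (A : Finset ℕ) :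
    UV.compress {i} {j} A = compress i j A := by
  rw [UV.compress, compress]
  by_cases h : j ∈ A ∧ i ∉ A
  · rw [if_pos ⟨by simpa using h.2, by simpa using h.1⟩, if_pos h]
    ext x
    simp only [sup_eq_union, mem_sdiff, mem_union, mem_singleton, mem_insert, mem_erase]
    constructor
    · rintro ⟨hx | hx, hxj⟩
      · exact Or.inr ⟨hxj, hx⟩
      · exact Or.inl hx
    · rintro (rfl | ⟨hxj, hx⟩)
      · exact ⟨Or.inr rfl, hij⟩
      · exact ⟨Or.inl hx, hxj⟩
  · rw [if_neg ?_, if_neg h]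
    intro hc
    exact h ⟨by simpa using hc.2, by simpa using hc.1⟩

lemma card_le_card_erase_add_one (s : Finset ℕ) (a : ℕ) : s.card ≤ (s.erase a).card + 1 := by
  by_cases h : a ∈ s
  · rw [card_erase_of_mem h]
    have : 0 < s.card := card_pos.2 ⟨a, h⟩
    omega
  · rw [erase_eq_of_notMem h]; omega

variable {t u i j : ℕ} {F : Finset (Finset ℕ)} {A B G : Finset ℕ}

lemma key_mu (hF : TInt t F) (hA : A ∈ F) (hB : B ∈ F)
    (hjA : j ∈ A) (hiA : i ∉ A) (hBk : compress i j B ∈ F) :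
    t ≤ (compress i j A ∩ B).card := by
  have hcA : compress i j A = insert i (A.erase j) := compress_of_pos ⟨hjA, hiA⟩
  by_cases hiB : i ∈ B
  · have hsub : insert i ((A ∩ B).erase j) ⊆ compress i j A ∩ B := by
      rw [hcA]
      intro x hx
      rcases mem_insert.1 hx with rfl | hx
      · exact mem_inter.2 ⟨mem_insert_self _ _, hiB⟩
      · have hxj := ne_of_mem_erase hx
        rcases mem_inter.1 (mem_of_mem_erase hx) with ⟨hxA, hxB⟩
        exact mem_inter.2 ⟨mem_insert.2 (Or.inr (mem_erase.2 ⟨hxj, hxA⟩)), hxB⟩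
    have h3 : (insert i ((A ∩ B).erase j)).card = ((A ∩ B).erase j).card + 1 :=
      card_insert_of_notMem (fun hx => hiA (mem_inter.1 (mem_of_mem_erase hx)).1)
    have h1 := hF A hA B hB
    have h2 := card_le_card_erase_add_one (A ∩ B) j
    have h4 := card_le_card hsub
    omega
  · by_cases hjB : j ∈ B
    · have hcB : compress i j B = insert i (B.erase j) := compress_of_pos ⟨hjB, hiB⟩
      have h1 : t ≤ (A ∩ compress i j B).card := hF A hA _ hBk
      have heq : A ∩ compress i j B = (A ∩ B).erase j := by
        rw [hcB]; ext x
        simp only [mem_inter, mem_insert, mem_erase]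
        constructor
        · rintro ⟨hxA, rfl | ⟨hxj, hxB⟩⟩
          · exact absurd hxA hiA
          · exact ⟨hxj, hxA, hxB⟩
        · rintro ⟨hxj, hxA, hxB⟩
          exact ⟨hxA, Or.inr ⟨hxj, hxB⟩⟩
      have hsub : (A ∩ B).erase j ⊆ compress i j A ∩ B := by
        rw [hcA]; intro x hx
        have hxj := ne_of_mem_erase hx
        rcases mem_inter.1 (mem_of_mem_erase hx) with ⟨hxA, hxB⟩
        exact mem_inter.2 ⟨mem_insert.2 (Or.inr (mem_erase.2 ⟨hxj, hxA⟩)), hxB⟩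
      rw [heq] at h1
      exact h1.trans (card_le_card hsub)
    · have hsub : A ∩ B ⊆ compress i j A ∩ B := by
        rw [hcA]; intro x hx
        rcases mem_inter.1 hx with ⟨hxA, hxB⟩
        have hxj : x ≠ j := fun h => hjB (h ▸ hxB)
        exact mem_inter.2 ⟨mem_insert.2 (Or.inr (mem_erase.2 ⟨hxj, hxA⟩)), hxB⟩
      exact (hF A hA B hB).trans (card_le_card hsub)

lemma key_mm (hF : TInt t F) (hA : A ∈ F) (hB : B ∈ F)
    (hjA : j ∈ A) (hiA : i ∉ A) (hjB : j ∈ B) (hiB : i ∉ B) :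
    t ≤ (compress i j A ∩ compress i j B).card := by
  rw [compress_of_pos ⟨hjA, hiA⟩, compress_of_pos ⟨hjB, hiB⟩]
  have heq : insert i (A.erase j) ∩ insert i (B.erase j) = insert i ((A ∩ B).erase j) := by
    ext x
    simp only [mem_inter, mem_insert, mem_erase]
    tauto
  rw [heq]
  have hji : j ∈ A ∩ B := mem_inter.2 ⟨hjA, hjB⟩
  rw [card_insert_of_notMem (fun hx => hiA (mem_inter.1 (mem_of_mem_erase hx)).1),
    card_erase_of_mem hji]
  have h1 := hF A hA B hB
  have : 0 < (A ∩ B).card := card_pos.2 ⟨j, hji⟩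
  omega

lemma tint_compression (hij : i < j) (hF : TInt t F) :
    TInt t (UV.compression {i} {j} F) := by
  have hc : ∀ S : Finset ℕ, UV.compress {i} {j} S = compress i j S :=
    uv_compress_eq hij.ne
  have extract : ∀ B : Finset ℕ, B ∈ F → compress i j B ∉ F → j ∈ B ∧ i ∉ B := by
    intro B hB hnB
    by_contra h
    rw [compress_of_neg h] at hnB
    exact hnB hB
  intro A' hA' B' hB'
  rw [UV.mem_compression] at hA' hB'
  simp only [hc] at hA' hB'
  rcases hA' with ⟨hA, hcA⟩ | ⟨hA', A, hAF, rfl⟩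
  · rcases hB' with ⟨hB, _⟩ | ⟨hB', B, hBF, rfl⟩
    · exact hF _ hA _ hB
    · have hB2 := extract B hBF (fun h => hB' h)
      rw [inter_comm]
      exact key_mu hF hBF hA hB2.1 hB2.2 hcA
  · have hA2 := extract A hAF (fun h => hA' h)
    rcases hB' with ⟨hB, hcB⟩ | ⟨hB', B, hBF, rfl⟩
    · exact key_mu hF hAF hB hA2.1 hA2.2 hcB
    · have hB2 := extract B hBF (fun h => hB' h)
      exact key_mm hF hAF hBF hA2.1 hA2.2 hB2.1 hB2.2

lemma unif_compression (hij : i ≠ j) (hU : Unif u F) :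
    Unif u (UV.compression {i} {j} F) := by
  intro A hA
  rw [UV.mem_compression] at hA
  rcases hA with ⟨hA, _⟩ | ⟨_, B, hB, rfl⟩
  · exact hU _ hA
  · rw [uv_compress_eq hij, compress_card]; exact hU _ hB

lemma subset_compression (hij : i ≠ j) (hiG : i ∈ G) (hFG : ∀ A ∈ F, A ⊆ G) :
    ∀ A ∈ UV.compression {i} {j} F, A ⊆ G := by
  intro A hA
  rw [UV.mem_compression] at hA
  rcases hA with ⟨hA, _⟩ | ⟨_, B, hB, rfl⟩
  · exact hFG _ hA
  · rw [uv_compress_eq hij]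
    exact (compress_subset B).trans (insert_subset hiG (hFG _ hB))

lemma fmeas_compression_lt (hij : i < j) (hne : UV.compression {i} {j} F ≠ F) :
    fmeas (UV.compression {i} {j} F) < fmeas F := by
  classical
  have hcc : ∀ S : Finset ℕ, UV.compress {i} {j} S = compress i j S :=
    uv_compress_eq hij.ne
  have himg : (F.image (UV.compress {i} {j})).filter (· ∉ F)
      = (F.filter (fun A => UV.compress {i} {j} A ∉ F)).image (UV.compress {i} {j}) := by
    ext B
    simp only [mem_filter, mem_image]
    constructor
    · rintro ⟨⟨A, hA, rfl⟩, hB⟩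
      exact ⟨A, ⟨hA, hB⟩, rfl⟩
    · rintro ⟨A, ⟨hA, hB⟩, rfl⟩
      exact ⟨⟨A, hA, rfl⟩, hB⟩
  have hcomp : UV.compression {i} {j} F
      = F.filter (fun A => UV.compress {i} {j} A ∈ F)
        ∪ (F.image (UV.compress {i} {j})).filter (· ∉ F) := by
    rw [UV.compression]
  have hinj : ∀ x ∈ F.filter (fun A => UV.compress {i} {j} A ∉ F),
      ∀ y ∈ F.filter (fun A => UV.compress {i} {j} A ∉ F),
      UV.compress {i} {j} x = UV.compress {i} {j} y → x = y := by
    intro x hx y hy hxy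
    exact UV.compress_injOn (by simpa using hx) (by simpa using hy) hxy
  have h1 : fmeas (UV.compression {i} {j} F)
      = (∑ A ∈ F.filter (fun A => UV.compress {i} {j} A ∈ F), ∑ x ∈ A, x)
        + ∑ A ∈ F.filter (fun A => UV.compress {i} {j} A ∉ F), ∑ x ∈ UV.compress {i} {j} A, x := by
    rw [fmeas, hcomp, sum_union UV.compress_disjoint, himg, sum_image hinj]
  have h2 : fmeas F = (∑ A ∈ F.filter (fun A => UV.compress {i} {j} A ∈ F), ∑ x ∈ A, x)
      + ∑ A ∈ F.filter (fun A => UV.compress {i} {j} A ∉ F), ∑ x ∈ A, x := by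
    rw [fmeas, sum_filter_add_sum_filter_not]
  have hne2 : (F.filter (fun A => UV.compress {i} {j} A ∉ F)).Nonempty := by
    rw [nonempty_iff_ne_empty]
    intro hemp
    apply hne
    rw [hcomp, himg, hemp, image_empty, union_empty, filter_eq_self]
    intro A hA
    by_contra hcA
    have : A ∈ F.filter (fun A => UV.compress {i} {j} A ∉ F) := mem_filter.2 ⟨hA, hcA⟩
    rw [hemp] at this
    exact notMem_empty _ this
  have hdec : ∀ A ∈ F.filter (fun A => UV.compress {i} {j} A ∉ F),
      (∑ x ∈ UV.compress {i} {j} A, x) < ∑ x ∈ A, x := by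
    intro A hA
    rcases mem_filter.1 hA with ⟨hAF, hcA⟩
    have hmov : j ∈ A ∧ i ∉ A := by
      by_contra h
      rw [hcc A, compress_of_neg h] at hcA
      exact hcA hAF
    rw [hcc A, compress_of_pos hmov]
    rw [sum_insert (not_mem_erase_of_not_mem hmov.2)]
    have h3 : (∑ x ∈ A.erase j, x) + j = ∑ x ∈ A, x := by
      simpa using Finset.sum_erase_add A (fun x => x) hmov.1
    have h4 : j ≤ ∑ x ∈ A, x := single_le_sum (f := fun x => x) (fun x _ => Nat.zero_le x) hmov.1
    omega
  have := sum_lt_sum_of_nonempty hne2 hdec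
  omega

lemma exists_shifted (G : Finset ℕ) (u t : ℕ) :
    ∀ N : ℕ, ∀ F : Finset (Finset ℕ), fmeas F ≤ N →
    (∀ A ∈ F, A ⊆ G) → Unif u F → TInt t F →
    ∃ F' : Finset (Finset ℕ), (∀ A ∈ F', A ⊆ G) ∧ Unif u F' ∧ TInt t F' ∧ ShiftedIn G F' ∧
      F'.card = F.card ∧ (∂ F').card ≤ (∂ F).card := by
  intro N
  induction N using Nat.strong_induction_on with
  | _ N IH =>
    intro F hmeas hG hU hT
    by_cases hs : ∀ i ∈ G, ∀ j ∈ G, i < j → UV.compression {i} {j} F = F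
    · refine ⟨F, hG, hU, hT, ?_, rfl, le_rfl⟩
      intro A hA i hi j hj hij
      have h1 := UV.compress_mem_compression (u := ({i} : Finset ℕ))
        (v := ({j} : Finset ℕ)) hA
      rw [uv_compress_eq hij.ne, hs i hi j hj hij] at h1
      exact h1
    · push_neg at hs
      obtain ⟨i, hi, j, hj, hij, hne⟩ := hs
      have hlt := fmeas_compression_lt hij hne
      obtain ⟨F', a, b, c', d, e, f⟩ := IH (fmeas (UV.compression {i} {j} F))
        (lt_of_lt_of_le hlt hmeas) _ le_rfl
        (subset_compression hij.ne hi hG) (unif_compression hij.ne hU)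
        (tint_compression hij hT)
      refine ⟨F', a, b, c', d, ?_, ?_⟩
      · rw [e, UV.card_compression]
      · refine f.trans (UV.card_shadow_compression_le _ _ ?_)
        intro x hx
        refine ⟨j, mem_singleton_self j, ?_⟩
        simp only [mem_singleton] at hx
        subst hx
        rw [erase_singleton, erase_singleton]
        exact UV.isCompressed_self _ _

lemma lym_count (G : Finset ℕ) (u : ℕ) (F : Finset (Finset ℕ))
    (hG : ∀ A ∈ F, A ⊆ G) (hU : Unif u F) :
    u * F.card ≤ (G.card - u + 1) * (∂ F).card := by
  classical
  rcases F.eq_empty_or_nonempty with rfl | hne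
  · simp
  have hu : 0 < u ∨ u = 0 := by omega
  rcases hu with hu | rfl
  swap
  · simp
  set S : Finset (Finset ℕ × ℕ) :=
    F.biUnion (fun A => A.image (fun x => (A.erase x, x))) with hS
  set T : Finset (Finset ℕ × ℕ) :=
    (∂ F).biUnion (fun B => (G \ B).image (fun x => (B, x))) with hT
  have hScard : S.card = u * F.card := by
    rw [hS, card_biUnion]
    · rw [Finset.sum_congr rfl (fun A hA => ?_), sum_const, smul_eq_mul, mul_comm]
      rw [card_image_of_injOn (fun x _ y _ h => congrArg Prod.snd h)]
      exact hU A hA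
    · intro A hA A' hA' hAA'
      rw [Function.onFun, disjoint_left]
      rintro p hp hp'
      rcases mem_image.1 hp with ⟨x, hx, rfl⟩
      rcases mem_image.1 hp' with ⟨y, hy, hEq⟩
      apply hAA'
      have h1 : A'.erase y = A.erase x := congrArg Prod.fst hEq
      have h2 : y = x := congrArg Prod.snd hEq
      subst h2
      rw [← insert_erase hx, ← h1, insert_erase hy]
  have hST : S ⊆ T := by
    intro p hp
    rw [hS, mem_biUnion] at hp
    obtain ⟨A, hA, hp⟩ := hp
    rcases mem_image.1 hp with ⟨x, hx, rfl⟩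
    rw [hT, mem_biUnion]
    refine ⟨A.erase x, erase_mem_shadow hA hx, ?_⟩
    exact mem_image.2 ⟨x, mem_sdiff.2 ⟨hG A hA hx, notMem_erase _ _⟩, rfl⟩
  have hTcard : T.card = (G.card - u + 1) * (∂ F).card := by
    rw [hT, card_biUnion]
    · rw [Finset.sum_congr rfl (fun B hB => ?_), sum_const, smul_eq_mul, mul_comm]
      rw [card_image_of_injOn (fun x _ y _ h => congrArg Prod.snd h)]
      obtain ⟨A, hA, x, hx, rfl⟩ := mem_shadow_iff.1 hB
      have hBA : A.erase x ⊆ G := (erase_subset _ _).trans (hG A hA)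
      rw [card_sdiff_of_subset hBA, card_erase_of_mem hx, hU A hA]
      have h1 : u ≤ G.card := (hU A hA) ▸ card_le_card (hG A hA)
      omega
    · intro B hB B' hB' hBB'
      rw [Function.onFun, disjoint_left]
      rintro p hp hp'
      rcases mem_image.1 hp with ⟨x, hx, rfl⟩
      rcases mem_image.1 hp' with ⟨y, hy, hEq⟩
      exact hBB' (congrArg Prod.fst hEq).symm
  rw [← hScard, ← hTcard]
  exact card_le_card hST

lemma tint_card_lower (hT : TInt t F) (hU : Unif u F) (hne : F.Nonempty) : t ≤ u := by
  obtain ⟨A, hA⟩ := hne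
  have := hT A hA A hA
  rwa [inter_self, hU A hA] at this

lemma compress_erase {M : ℕ} (hiM : i ≠ M) (hjM : j ≠ M) (A : Finset ℕ) :
    compress i j (A.erase M) = (compress i j A).erase M := by
  by_cases h : j ∈ A ∧ i ∉ A
  · have h' : j ∈ A.erase M ∧ i ∉ A.erase M :=
      ⟨mem_erase.2 ⟨hjM, h.1⟩, not_mem_erase_of_not_mem h.2⟩
    rw [compress_of_pos h, compress_of_pos h']
    ext y
    simp only [mem_insert, mem_erase]
    constructor
    · rintro (rfl | ⟨h1, h2, h3⟩)
      · exact ⟨hiM, Or.inl rfl⟩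
      · exact ⟨h2, Or.inr ⟨h1, h3⟩⟩
    · rintro ⟨h1, rfl | ⟨h2, h3⟩⟩
      · exact Or.inl rfl
      · exact Or.inr ⟨h2, h1, h3⟩
  · have h' : ¬(j ∈ A.erase M ∧ i ∉ A.erase M) := by
      rintro ⟨h1, h2⟩
      exact h ⟨mem_of_mem_erase h1, fun hiA => h2 (mem_erase.2 ⟨hiM, hiA⟩)⟩
    rw [compress_of_neg h, compress_of_neg h']

lemma katona_shifted (t : ℕ) (ht : 1 ≤ t) :
    ∀ N : ℕ, ∀ G : Finset ℕ, G.card ≤ N → ∀ u : ℕ, ∀ F : Finset (Finset ℕ),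
    (∀ A ∈ F, A ⊆ G) → Unif u F → TInt t F → ShiftedIn G F →
    u * F.card ≤ (u - t + 1) * (∂ F).card := by
  classical
  intro N
  induction N with
  | zero =>
    intro G hG u F hFG hU hT _
    rcases F.eq_empty_or_nonempty with rfl | hne
    · simp
    · obtain ⟨A, hA⟩ := hne
      have hG0 : G = ∅ := card_eq_zero.1 (Nat.le_antisymm hG (Nat.zero_le _))
      have hA0 : A = ∅ := subset_empty.1 (hG0 ▸ hFG A hA)
      have h1 := hT A hA A hA
      rw [hA0] at h1
      simp at h1
      omega
  | succ N IH =>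
    intro G hG u F hFG hU hT hSh
    rcases F.eq_empty_or_nonempty with rfl | hne
    · simp
    have htu : t ≤ u := tint_card_lower hT hU hne
    by_cases hbase : G.card ≤ 2 * u - t
    · have h1 := lym_count G u F hFG hU
      have h2 : G.card - u + 1 ≤ u - t + 1 := by omega
      exact h1.trans (Nat.mul_le_mul_right _ h2)
    · have hGne : G.Nonempty := by
        rw [← card_pos]; omega
      set M := G.max' hGne with hM
      have hMG : M ∈ G := G.max'_mem hGne
      set G' := G.erase M with hG'
      have hG'sub : ∀ x ∈ G', x ∈ G := fun x hx => mem_of_mem_erase hx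
      have hG'M : ∀ x ∈ G', x ≠ M := fun x hx => ne_of_mem_erase hx
      have hG'lt : ∀ x ∈ G', x < M :=
        fun x hx => lt_of_le_of_ne (G.le_max' x (hG'sub x hx)) (hG'M x hx)
      have hG'card : G'.card = G.card - 1 := card_erase_of_mem hMG
      have hG'le : G'.card ≤ N := by omega
      set F₀ := F.filter (fun A => M ∉ A) with hF₀
      set F₁ := (F.filter (fun A => M ∈ A)).image (fun A => A.erase M) with hF₁
      have hF₁mem : ∀ B ∈ F₁, ∃ A, A ∈ F ∧ M ∈ A ∧ B = A.erase M := by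
        intro B hB
        rw [hF₁, mem_image] at hB
        obtain ⟨A, hA, rfl⟩ := hB
        rcases mem_filter.1 hA with ⟨h1, h2⟩
        exact ⟨A, h1, h2, rfl⟩
      -- F₀ properties
      have hF₀G : ∀ A ∈ F₀, A ⊆ G' := by
        intro A hA
        rcases mem_filter.1 hA with ⟨h1, h2⟩
        rw [hG', subset_erase]
        exact ⟨hFG A h1, h2⟩
      have hF₀U : Unif u F₀ := fun A hA => hU A (mem_filter.1 hA).1
      have hF₀T : TInt t F₀ := fun A hA B hB => hT A (mem_filter.1 hA).1 B (mem_filter.1 hB).1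
      have hF₀S : ShiftedIn G' F₀ := by
        intro A hA i hi j hj hij
        rcases mem_filter.1 hA with ⟨h1, h2⟩
        refine mem_filter.2 ⟨hSh A h1 i (hG'sub i hi) j (hG'sub j hj) hij, ?_⟩
        intro hMc
        rcases mem_insert.1 (compress_subset A hMc) with h | h
        · exact hG'M i hi h.symm
        · exact h2 h
      -- F₁ properties
      have hF₁G : ∀ B ∈ F₁, B ⊆ G' := by
        intro B hB
        obtain ⟨A, hA, hMA, rfl⟩ := hF₁mem B hB
        intro x hx
        rw [hG', mem_erase]
        exact ⟨ne_of_mem_erase hx, hFG A hA (mem_of_mem_erase hx)⟩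
      have hF₁U : Unif (u - 1) F₁ := by
        intro B hB
        obtain ⟨A, hA, hMA, rfl⟩ := hF₁mem B hB
        rw [card_erase_of_mem hMA, hU A hA]
      have hcard : F.card = F₀.card + F₁.card := by
        have h1 : F₁.card = (F.filter (fun A => M ∈ A)).card := by
          rw [hF₁]
          apply card_image_of_injOn
          intro A hA B hB hEq
          have h2 : M ∈ A := (mem_filter.1 (mem_coe.1 hA)).2
          have h3 : M ∈ B := (mem_filter.1 (mem_coe.1 hB)).2
          have hEq' : A.erase M = B.erase M := hEq
          rw [← insert_erase h2, hEq', insert_erase h3]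
        rw [h1, hF₀, Nat.add_comm]
        exact (card_filter_add_card_filter_not (fun A => M ∈ A)).symm
      have hF₁T : TInt t F₁ := by
        intro a ha b hb
        obtain ⟨A, hAF, hMA, rfl⟩ := hF₁mem a ha
        obtain ⟨B, hBF, hMB, rfl⟩ := hF₁mem b hb
        by_cases hcase : t ≤ ((A.erase M) ∩ (B.erase M)).card
        · exact hcase
        exfalso
        have hABint : A ∩ B = insert M ((A.erase M) ∩ (B.erase M)) := by
          ext x
          simp only [mem_inter, mem_insert, mem_erase]
          constructor
          · rintro ⟨h1, h2⟩
            by_cases hxM : x = M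
            · exact Or.inl hxM
            · exact Or.inr ⟨⟨hxM, h1⟩, hxM, h2⟩
          · rintro (rfl | ⟨⟨_, h1⟩, _, h2⟩)
            · exact ⟨hMA, hMB⟩
            · exact ⟨h1, h2⟩
        have hABcard : (A ∩ B).card = ((A.erase M) ∩ (B.erase M)).card + 1 := by
          rw [hABint, card_insert_of_notMem]
          intro h
          exact (mem_erase.1 (mem_inter.1 h).1).1 rfl
        have ht1 := hT A hAF B hBF
        have hexact : ((A.erase M) ∩ (B.erase M)).card = t - 1 := by omega
        -- find a free element
        have hcup : ((A.erase M) ∪ (B.erase M)).card < G'.card := by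
          have hcae : (A.erase M).card = u - 1 := hF₁U _ ha
          have hcbe : (B.erase M).card = u - 1 := hF₁U _ hb
          have := card_union_add_card_inter (A.erase M) (B.erase M)
          have hu1 : 1 ≤ u := by omega
          omega
        have hsub : (A.erase M) ∪ (B.erase M) ⊆ G' :=
          union_subset (hF₁G _ ha) (hF₁G _ hb)
        have hex : ∃ x ∈ G', x ∉ (A.erase M) ∪ (B.erase M) := by
          by_contra h
          push_neg at h
          exact absurd (card_le_card (fun x hx => h x hx)) (Nat.not_le.2 hcup)
        obtain ⟨x, hxG', hxab⟩ := hex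
        have hxA : x ∉ A := by
          intro hxA
          exact hxab (mem_union_left _ (mem_erase.2 ⟨hG'M x hxG', hxA⟩))
        have hcomp : compress x M A ∈ F := hSh A hAF x (hG'sub x hxG') M hMG (hG'lt x hxG')
        have hcompeq : compress x M A = insert x (A.erase M) := compress_of_pos ⟨hMA, hxA⟩
        have ht2 := hT _ hcomp B hBF
        rw [hcompeq] at ht2
        have hint2 : insert x (A.erase M) ∩ B = (A.erase M) ∩ (B.erase M) := by
          ext y
          simp only [mem_inter, mem_insert, mem_erase]
          constructor
          · rintro ⟨rfl | ⟨h1, h2⟩, h3⟩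
            · exfalso
              apply hxab
              exact mem_union_right _ (mem_erase.2 ⟨hG'M _ hxG', h3⟩)
            · exact ⟨⟨h1, h2⟩, h1, h3⟩
          · rintro ⟨⟨h1, h2⟩, _, h3⟩
            exact ⟨Or.inr ⟨h1, h2⟩, h3⟩
        rw [hint2] at ht2
        omega
      have hF₁S : ShiftedIn G' F₁ := by
        intro B hB i hi j hj hij
        obtain ⟨A, hAF, hMA, rfl⟩ := hF₁mem B hB
        rw [compress_erase (hG'M i hi) (hG'M j hj)]
        have h1 : compress i j A ∈ F := hSh A hAF i (hG'sub i hi) j (hG'sub j hj) hij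
        have h2 : M ∈ compress i j A := by
          by_cases h : j ∈ A ∧ i ∉ A
          · rw [compress_of_pos h]
            exact mem_insert.2 (Or.inr (mem_erase.2 ⟨(hG'M j hj).symm, hMA⟩))
          · rw [compress_of_neg h]; exact hMA
        rw [hF₁, mem_image]
        exact ⟨compress i j A, mem_filter.2 ⟨h1, h2⟩, rfl⟩
      -- shadow decomposition
      have hShad : (∂ F₀).card + (∂ F₁).card ≤ (∂ F).card := by
        have hsplit : ((∂ F).filter (fun S => M ∉ S)).card
            + ((∂ F).filter (fun S => ¬ M ∉ S)).card = (∂ F).card :=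
          card_filter_add_card_filter_not (fun S => M ∉ S)
        have c1 : ∂ F₀ ⊆ (∂ F).filter (fun S => M ∉ S) := by
          intro S hS
          obtain ⟨A, hA, x, hx, rfl⟩ := mem_shadow_iff.1 hS
          rcases mem_filter.1 hA with ⟨h1, h2⟩
          exact mem_filter.2 ⟨erase_mem_shadow h1 hx, fun h => h2 (mem_of_mem_erase h)⟩
        have c2 : (∂ F₁).card ≤ ((∂ F).filter (fun S => ¬ M ∉ S)).card := by
          apply card_le_card_of_injOn (fun S => insert M S)
          · intro S hS
            obtain ⟨B, hB, x, hx, rfl⟩ := mem_shadow_iff.1 hS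
            obtain ⟨A, hAF, hMA, rfl⟩ := hF₁mem B hB
            have hxM : x ≠ M := ne_of_mem_erase hx
            have hxA : x ∈ A := mem_of_mem_erase hx
            have heq : insert M ((A.erase M).erase x) = A.erase x := by
              ext y
              simp only [mem_insert, mem_erase]
              constructor
              · rintro (rfl | ⟨h1, h2, h3⟩)
                · exact ⟨(Ne.symm hxM), hMA⟩
                · exact ⟨h1, h3⟩
              · rintro ⟨h1, h2⟩
                by_cases hyM : y = M
                · exact Or.inl hyM
                · exact Or.inr ⟨h1, hyM, h2⟩
            simp only [mem_coe]; rw [heq]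
            refine mem_filter.2 ⟨erase_mem_shadow hAF hxA, ?_⟩
            simp only [not_not]
            exact mem_erase.2 ⟨Ne.symm hxM, hMA⟩
          · intro S hS S' hS' hEq
            have hMS : M ∉ S := by
              obtain ⟨B, hB, x, hx, rfl⟩ := mem_shadow_iff.1 (mem_coe.1 hS)
              intro h
              have := hF₁G B hB (mem_of_mem_erase h)
              exact hG'M M this rfl
            have hMS' : M ∉ S' := by
              obtain ⟨B, hB, x, hx, rfl⟩ := mem_shadow_iff.1 (mem_coe.1 hS')
              intro h
              have := hF₁G B hB (mem_of_mem_erase h)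
              exact hG'M M this rfl
            have hEq' : insert M S = insert M S' := hEq
            rw [← erase_insert hMS, hEq', erase_insert hMS']
        have c1' := card_le_card c1
        omega
      -- apply induction hypotheses
      have ih0 := IH G' hG'le u F₀ hF₀G hF₀U hF₀T hF₀S
      rcases F₁.eq_empty_or_nonempty with hF₁e | hF₁ne
      · rw [hcard, hF₁e]
        simp only [card_empty, Nat.add_zero]
        refine ih0.trans (Nat.mul_le_mul_left _ ?_)
        rw [hF₁e] at hShad
        simpa using hShad
      · have ih1 := IH G' hG'le (u - 1) F₁ hF₁G hF₁U hF₁T hF₁S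
        have ht1u : t ≤ u - 1 := tint_card_lower hF₁T hF₁U hF₁ne
        have hkey : u * F₁.card ≤ (u - t + 1) * (∂ F₁).card := by
          obtain ⟨d, hd⟩ : ∃ d, u - 1 - t = d := ⟨_, rfl⟩
          obtain ⟨s, hs⟩ : ∃ s, t = s + 1 := ⟨t - 1, by omega⟩
          have e1 : u - 1 = s + 1 + d := by omega
          have e2 : u = s + d + 2 := by omega
          have e3 : u - t + 1 = d + 2 := by omega
          have e4 : u - 1 - t + 1 = d + 1 := by omega
          rw [e3, e2]
          rw [e4, e1] at ih1
          -- ih1 : (s + 1 + d) * F₁.card ≤ (d + 1) * (∂ F₁).card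
          -- goal : (s + d + 2) * F₁.card ≤ (d + 2) * (∂ F₁).card
          nlinarith [ih1, Nat.zero_le ((∂ F₁).card), Nat.zero_le F₁.card,
            Nat.zero_le s, Nat.zero_le d]
        calc u * F.card = u * F₀.card + u * F₁.card := by rw [hcard, Nat.mul_add]
          _ ≤ (u - t + 1) * (∂ F₀).card + (u - t + 1) * (∂ F₁).card :=
              Nat.add_le_add ih0 hkey
          _ = (u - t + 1) * ((∂ F₀).card + (∂ F₁).card) := by rw [Nat.mul_add]
          _ ≤ (u - t + 1) * (∂ F).card := Nat.mul_le_mul_left _ hShad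

lemma katona_card_lt_shadow (G : Finset ℕ) (u : ℕ) (F : Finset (Finset ℕ))
    (hG : ∀ A ∈ F, A ⊆ G) (hU : Unif u F) (hT : TInt 2 F) (hne : F.Nonempty) :
    F.card < (∂ F).card := by
  obtain ⟨F', hG', hU', hT', hSh', hcard, hshad⟩ :=
    exists_shifted G u 2 (fmeas F) F le_rfl hG hU hT
  have h2u : 2 ≤ u := tint_card_lower hT hU hne
  have hK := katona_shifted 2 (by norm_num) G.card G le_rfl u F' hG' hU' hT' hSh'
  rw [hcard] at hK
  have h3 : u * F.card ≤ (u - 2 + 1) * (∂ F).card :=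
    hK.trans (Nat.mul_le_mul_left _ hshad)
  have hFpos : 1 ≤ F.card := card_pos.2 hne
  by_contra hcon
  push_neg at hcon
  have h4 : u * F.card ≤ (u - 2 + 1) * F.card :=
    h3.trans (Nat.mul_le_mul_left _ hcon)
  have h5 : u ≤ u - 2 + 1 := by
    rcases Nat.lt_or_ge (u - 2 + 1) u with h | h
    · exfalso
      have := Nat.mul_lt_mul_of_lt_of_le h (le_refl F.card) hFpos
      omega
    · exact h
  omega

lemma katonaB (X : Finset ℕ) (h : ℕ) (G : Finset (Finset ℕ)) (hX : X.card = 2 * h)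
    (hG : ∀ A ∈ G, A ⊆ X) (h2 : TInt 2 G) :
    G.card ≤ (X.powerset.filter (fun S => h + 1 ≤ S.card)).card ∧
      (G.card = (X.powerset.filter (fun S => h + 1 ≤ S.card)).card →
        G = X.powerset.filter (fun S => h + 1 ≤ S.card)) := by
  classical
  set T := X.powerset.filter (fun S => h + 1 ≤ S.card) with hT
  have key : ∀ a, a ≤ h → (G.filter (fun A => A.card = a)).Nonempty →
      (G.filter (fun A => A.card = a)).card
        < ((T \ G).filter (fun S => S.card = 2 * h + 1 - a)).card := by
    intro a ha hane
    set Ga := G.filter (fun A => A.card = a) with hGa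
    have hGaU : Unif a Ga := fun A hA => (mem_filter.1 hA).2
    have hGaT : TInt 2 Ga := fun A hA B hB => h2 A (mem_filter.1 hA).1 B (mem_filter.1 hB).1
    have hGaG : ∀ A ∈ Ga, A ⊆ X := fun A hA => hG A (mem_filter.1 hA).1
    have ha2 : 2 ≤ a := tint_card_lower hGaT hGaU hane
    have hlt := katona_card_lt_shadow X a Ga hGaG hGaU hGaT hane
    have hsubX : ∀ S ∈ ∂ Ga, S ⊆ X ∧ S.card = a - 1 := by
      intro S hS
      obtain ⟨A, hA, x, hx, rfl⟩ := mem_shadow_iff.1 hS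
      exact ⟨(erase_subset _ _).trans (hGaG A hA),
        by rw [card_erase_of_mem hx, hGaU A hA]⟩
    have hinj : (∂ Ga).card ≤ ((T \ G).filter (fun S => S.card = 2 * h + 1 - a)).card := by
      apply card_le_card_of_injOn (fun S => X \ S)
      · intro S hS
        obtain ⟨hSX, hScard⟩ := hsubX S hS
        obtain ⟨A, hA, x, hx, rfl⟩ := mem_shadow_iff.1 hS
        have hcardXS : (X \ (A.erase x)).card = 2 * h + 1 - a := by
          rw [card_sdiff_of_subset hSX, hX, hScard]
          omega
        refine mem_filter.2 ⟨mem_sdiff.2 ⟨mem_filter.2 ⟨mem_powerset.2 (sdiff_subset), ?_⟩, ?_⟩,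
          hcardXS⟩
        · rw [hcardXS]; omega
        · intro hmem
          have hint : 2 ≤ (A ∩ (X \ (A.erase x))).card := h2 A (mem_filter.1 hA).1 _ hmem
          have hsub1 : A ∩ (X \ (A.erase x)) ⊆ {x} := by
            intro y hy
            rcases mem_inter.1 hy with ⟨hyA, hyX⟩
            rcases mem_sdiff.1 hyX with ⟨_, hyS⟩
            rw [mem_singleton]
            by_contra hyx
            exact hyS (mem_erase.2 ⟨hyx, hyA⟩)
          have := card_le_card hsub1
          simp only [card_singleton] at this
          omega
      · intro S hSmem S' hS'mem hEq
        have hEq' : X \ S = X \ S' := hEq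
        have h1 := (hsubX S (mem_coe.1 hSmem)).1
        have h2' := (hsubX S' (mem_coe.1 hS'mem)).1
        rw [← Finset.sdiff_sdiff_eq_self h1, hEq', Finset.sdiff_sdiff_eq_self h2']
    omega
  -- fiberwise decomposition of the small part
  set Gs := G.filter (fun A => A.card ≤ h) with hGs
  have hfib : Gs.card = ∑ a ∈ Finset.range (h + 1), (Gs.filter (fun A => A.card = a)).card :=
    card_eq_sum_card_fiberwise (fun A hA => mem_range.2 (by
      have := (mem_filter.1 hA).2; omega))
  have hfib2 : ∀ a ∈ Finset.range (h + 1),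
      (Gs.filter (fun A => A.card = a)).card = (G.filter (fun A => A.card = a)).card := by
    intro a ha
    rw [mem_range] at ha
    congr 1
    rw [hGs, filter_filter]
    apply filter_congr
    intro A _
    constructor
    · rintro ⟨_, h2⟩; exact h2
    · intro h1; exact ⟨by omega, h1⟩
  have hsum2 : (∑ a ∈ Finset.range (h + 1),
      ((T \ G).filter (fun S => S.card = 2 * h + 1 - a)).card) ≤ (T \ G).card := by
    rw [← card_biUnion]
    · apply card_le_card
      apply biUnion_subset.2
      intro a _
      exact filter_subset _ _
    · intro a ha b hb hab
      rw [Function.onFun, disjoint_left]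
      intro S hS1 hS2
      have e1 := (mem_filter.1 hS1).2
      have e2 := (mem_filter.1 hS2).2
      rw [mem_coe, mem_range] at ha hb
      omega
  have hmain : ∀ a ∈ Finset.range (h + 1), (G.filter (fun A => A.card = a)).card
      ≤ ((T \ G).filter (fun S => S.card = 2 * h + 1 - a)).card := by
    intro a ha
    rcases (G.filter (fun A => A.card = a)).eq_empty_or_nonempty with he | hne
    · rw [he]; simp
    · exact (key a (by rw [mem_range] at ha; omega) hne).le
  have hsmall : Gs.card ≤ (T \ G).card := by
    rw [hfib]
    calc (∑ a ∈ Finset.range (h + 1), (Gs.filter (fun A => A.card = a)).card)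
        = ∑ a ∈ Finset.range (h + 1), (G.filter (fun A => A.card = a)).card :=
          Finset.sum_congr rfl hfib2
      _ ≤ ∑ a ∈ Finset.range (h + 1),
            ((T \ G).filter (fun S => S.card = 2 * h + 1 - a)).card :=
          Finset.sum_le_sum hmain
      _ ≤ (T \ G).card := hsum2
  have hsmall_strict : Gs.Nonempty → Gs.card < (T \ G).card := by
    intro hne
    obtain ⟨A, hA⟩ := hne
    have haG : A ∈ G := (mem_filter.1 hA).1
    have haC : A.card ≤ h := (mem_filter.1 hA).2
    have hstrict : ∃ a ∈ Finset.range (h + 1), (G.filter (fun A => A.card = a)).card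
        < ((T \ G).filter (fun S => S.card = 2 * h + 1 - a)).card := by
      refine ⟨A.card, mem_range.2 (by omega), ?_⟩
      exact key A.card haC ⟨A, mem_filter.2 ⟨haG, rfl⟩⟩
    rw [hfib]
    calc (∑ a ∈ Finset.range (h + 1), (Gs.filter (fun A => A.card = a)).card)
        = ∑ a ∈ Finset.range (h + 1), (G.filter (fun A => A.card = a)).card :=
          Finset.sum_congr rfl hfib2
      _ < ∑ a ∈ Finset.range (h + 1),
            ((T \ G).filter (fun S => S.card = 2 * h + 1 - a)).card :=
          Finset.sum_lt_sum hmain hstrict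
      _ ≤ (T \ G).card := hsum2
  have hGsplit : G.card = Gs.card + (G.filter (fun A => ¬ A.card ≤ h)).card := by
    rw [hGs]
    exact (card_filter_add_card_filter_not (s := G) (fun A => A.card ≤ h)).symm
  have hbig : G.filter (fun A => ¬ A.card ≤ h) = T.filter (fun S => S ∈ G) := by
    ext A
    simp only [mem_filter, hT, mem_powerset]
    constructor
    · rintro ⟨hAG, hc⟩
      exact ⟨⟨hG A hAG, by omega⟩, hAG⟩
    · rintro ⟨⟨_, hc⟩, hAG⟩
      exact ⟨hAG, by omega⟩
  have hTsplit : T.card = (T.filter (fun S => S ∈ G)).card + (T \ G).card := by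
    rw [sdiff_eq_filter]
    exact (card_filter_add_card_filter_not (s := T) (fun S => S ∈ G)).symm
  constructor
  · rw [hGsplit, hbig, hTsplit]
    omega
  · intro hEq
    have hGseq : Gs = ∅ := by
      rcases Gs.eq_empty_or_nonempty with he | hne
      · exact he
      · exfalso
        have := hsmall_strict hne
        rw [hGsplit, hbig, hTsplit] at hEq
        omega
    have hGT : G ⊆ T := by
      intro A hA
      have : ¬ A.card ≤ h := by
        intro hc
        have : A ∈ Gs := mem_filter.2 ⟨hA, hc⟩
        rw [hGseq] at this
        exact notMem_empty _ this
      exact mem_filter.2 ⟨mem_powerset.2 (hG A hA), by omega⟩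
    exact eq_of_subset_of_card_le hGT (le_of_eq hEq.symm)

end Stmt15

section Glue
open Stmt15

theorem Stmt15.main (n : ℕ) (hn : 7 ≤ n) (hodd : Odd n) (F : Finset (Finset ℕ))
    (hF : ∀ A ∈ F, A ⊆ ground n) (h3 : ∀ A ∈ F, ∀ B ∈ F, 3 ≤ (A ∩ B).card)
    (htriv : ∀ A ∈ F, A.card ≤ n - 3 → 1 ∈ A)
    (famF : Finset (Finset ℕ))
    (hfam : famF = (ground n).powerset.filter
      (fun A => (1 ∈ A ∧ (n + 3) / 2 ≤ A.card) ∨ (1 ∉ A ∧ n - 2 ≤ A.card))) :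
    F.card ≤ famF.card ∧ (F.card = famF.card ↔ F = famF) := by
  classical
  obtain ⟨k, rfl⟩ : ∃ k, n = 2 * k + 1 := by
    obtain ⟨k, hk⟩ := hodd; exact ⟨k, by omega⟩
  have hk3 : 3 ≤ k := by omega
  set X := Finset.Icc 2 (2 * k + 1) with hXdef
  have hXcard : X.card = 2 * k := by rw [hXdef, Nat.card_Icc]; omega
  have h1X : (1 : ℕ) ∉ X := by rw [hXdef, mem_Icc]; omega
  have hXg : X ⊆ ground (2 * k + 1) := by
    intro x hx
    rw [hXdef, mem_Icc] at hx
    rw [ground, mem_Icc]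
    omega
  have hgX : ∀ A : Finset ℕ, A ⊆ ground (2 * k + 1) → 1 ∉ A → A ⊆ X := by
    intro A hA h1A x hx
    have := hA hx
    rw [ground, mem_Icc] at this
    rw [hXdef, mem_Icc]
    have : x ≠ 1 := fun h => h1A (h ▸ hx)
    omega
  set T := X.powerset.filter (fun S => k + 1 ≤ S.card) with hTdef
  set F1 := F.filter (fun A => 1 ∈ A) with hF1
  set F0 := F.filter (fun A => 1 ∉ A) with hF0
  set Gf := F1.image (fun A => A.erase 1) with hGf
  have hGfmem : ∀ B ∈ Gf, ∃ A, A ∈ F ∧ 1 ∈ A ∧ B = A.erase 1 := by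
    intro B hB
    rw [hGf, mem_image] at hB
    obtain ⟨A, hA, rfl⟩ := hB
    rcases mem_filter.1 hA with ⟨h1, h2⟩
    exact ⟨A, h1, h2, rfl⟩
  have hGfcard : Gf.card = F1.card := by
    rw [hGf]
    apply card_image_of_injOn
    intro A hA B hB hEq
    have h2 : (1 : ℕ) ∈ A := (mem_filter.1 (mem_coe.1 hA)).2
    have h3' : (1 : ℕ) ∈ B := (mem_filter.1 (mem_coe.1 hB)).2
    have hEq' : A.erase 1 = B.erase 1 := hEq
    rw [← insert_erase h2, hEq', insert_erase h3']
  have hGfX : ∀ B ∈ Gf, B ⊆ X := by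
    intro B hB
    obtain ⟨A, hAF, h1A, rfl⟩ := hGfmem B hB
    intro x hx
    have hxg := hF A hAF (mem_of_mem_erase hx)
    rw [ground, mem_Icc] at hxg
    rw [hXdef, mem_Icc]
    have := ne_of_mem_erase hx
    omega
  have hGfT : TInt 2 Gf := by
    intro a ha b hb
    obtain ⟨A, hAF, h1A, rfl⟩ := hGfmem a ha
    obtain ⟨B, hBF, h1B, rfl⟩ := hGfmem b hb
    have hint : (A.erase 1) ∩ (B.erase 1) = (A ∩ B).erase 1 := by
      ext x
      simp only [mem_inter, mem_erase]
      tauto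
    rw [hint]
    have h1AB : (1 : ℕ) ∈ A ∩ B := mem_inter.2 ⟨h1A, h1B⟩
    rw [card_erase_of_mem h1AB]
    have := h3 A hAF B hBF
    omega
  obtain ⟨hle, heqT⟩ := katonaB X k Gf hXcard hGfX hGfT
  rw [← hTdef] at hle heqT
  -- F0 bound
  set Y := X.powerset.filter (fun S => 2 * k - 1 ≤ S.card) with hYdef
  have hF0Y : F0 ⊆ Y := by
    intro A hA
    rcases mem_filter.1 hA with ⟨hAF, h1A⟩
    have hAX : A ⊆ X := hgX A (hF A hAF) h1A
    have hcard : 2 * k - 1 ≤ A.card := by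
      by_contra hc
      exact h1A (htriv A hAF (by omega))
    exact mem_filter.2 ⟨mem_powerset.2 hAX, hcard⟩
  have hF0le : F0.card ≤ Y.card := card_le_card hF0Y
  -- famF decomposition
  set P1 := (ground (2 * k + 1)).powerset.filter
    (fun A => 1 ∈ A ∧ (2 * k + 1 + 3) / 2 ≤ A.card) with hP1
  set P0 := (ground (2 * k + 1)).powerset.filter
    (fun A => 1 ∉ A ∧ 2 * k + 1 - 2 ≤ A.card) with hP0
  have hfam2 : famF = P1 ∪ P0 := by
    rw [hfam, hP1, hP0, ← filter_or]
  have hfamcard : famF.card = P1.card + P0.card := by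
    rw [hfam2]
    apply card_union_of_disjoint
    rw [disjoint_left]
    intro A hA hA'
    exact ((mem_filter.1 hA').2).1 ((mem_filter.1 hA).2).1
  have harith : (2 * k + 1 + 3) / 2 = k + 2 := by omega
  have hP1T : P1.card = T.card := by
    apply card_bij (fun A _ => A.erase 1)
    · intro A hA
      rcases mem_filter.1 hA with ⟨hpow, h1A, hcard⟩
      refine mem_filter.2 ⟨mem_powerset.2
        (hgX _ ((erase_subset _ _).trans (mem_powerset.1 hpow)) (notMem_erase _ _)), ?_⟩
      rw [card_erase_of_mem h1A]
      omega
    · intro A hA B hB hEq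
      have h1A := ((mem_filter.1 hA).2).1
      have h1B := ((mem_filter.1 hB).2).1
      rw [← insert_erase h1A, hEq, insert_erase h1B]
    · intro S hS
      rcases mem_filter.1 hS with ⟨hpow, hcard⟩
      have hSX : S ⊆ X := mem_powerset.1 hpow
      have h1S : (1 : ℕ) ∉ S := fun hc => h1X (hSX hc)
      refine ⟨insert 1 S, mem_filter.2 ⟨mem_powerset.2 ?_, ?_, ?_⟩, ?_⟩
      · exact insert_subset (by rw [ground, mem_Icc]; omega) ((hSX).trans hXg)
      · exact mem_insert_self _ _
      · rw [card_insert_of_notMem h1S]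
        omega
      · rw [erase_insert h1S]
  have hP0Y : P0 = Y := by
    ext A
    rw [hP0, hYdef, mem_filter, mem_filter, mem_powerset, mem_powerset]
    constructor
    · rintro ⟨hsub, h1A, hcard⟩
      exact ⟨hgX A hsub h1A, by omega⟩
    · rintro ⟨hsub, hcard⟩
      exact ⟨hsub.trans hXg, fun hc => h1X (hsub hc), by omega⟩
  have hFsplit : F.card = F1.card + F0.card := by
    rw [hF1, hF0]
    exact (card_filter_add_card_filter_not (s := F) (fun A => 1 ∈ A)).symm
  have htotal : F.card ≤ famF.card := by
    rw [hfamcard, hP1T, hP0Y, hFsplit, ← hGfcard]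
    omega
  refine ⟨htotal, ?_, fun hFeq => by rw [hFeq]⟩
  intro hEq
  have hGfTc : Gf.card = T.card ∧ F0.card = Y.card := by
    rw [hfamcard, hP1T, hP0Y, hFsplit, ← hGfcard] at hEq
    constructor <;> omega
  have hGfeq : Gf = T := heqT hGfTc.1
  have hF0eq : F0 = Y := eq_of_subset_of_card_le hF0Y (le_of_eq hGfTc.2.symm)
  -- now prove F = famF
  rw [hfam2]
  ext A
  constructor
  · intro hAF
    by_cases h1A : 1 ∈ A
    · have hAe : A.erase 1 ∈ Gf := by
        rw [hGf, mem_image]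
        exact ⟨A, mem_filter.2 ⟨hAF, h1A⟩, rfl⟩
      rw [hGfeq, hTdef] at hAe
      rcases mem_filter.1 hAe with ⟨hpow, hcard⟩
      apply mem_union_left
      refine mem_filter.2 ⟨mem_powerset.2 (hF A hAF), h1A, ?_⟩
      rw [card_erase_of_mem h1A] at hcard
      omega
    · have hA0 : A ∈ F0 := mem_filter.2 ⟨hAF, h1A⟩
      rw [hF0eq, hYdef] at hA0
      rcases mem_filter.1 hA0 with ⟨hpow, hcard⟩
      apply mem_union_right
      exact mem_filter.2 ⟨mem_powerset.2 (hF A hAF), h1A, by omega⟩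
  · intro hAfam
    rcases mem_union.1 hAfam with hA1 | hA0
    · rcases mem_filter.1 hA1 with ⟨hpow, h1A, hcard⟩
      have hsub : A ⊆ ground (2 * k + 1) := mem_powerset.1 hpow
      have hAe : A.erase 1 ∈ T := by
        rw [hTdef]
        refine mem_filter.2 ⟨mem_powerset.2 (hgX _ ((erase_subset _ _).trans hsub) (notMem_erase _ _)), ?_⟩
        rw [card_erase_of_mem h1A]
        omega
      rw [← hGfeq] at hAe
      obtain ⟨B, hBF, h1B, hBe⟩ := hGfmem _ hAe
      have : B = A := by
        rw [← insert_erase h1B, ← hBe, insert_erase h1A]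
      rwa [← this]
    · rcases mem_filter.1 hA0 with ⟨hpow, h1A, hcard⟩
      have hAY : A ∈ Y := by
        rw [hYdef]
        refine mem_filter.2 ⟨mem_powerset.2 (hgX _ (mem_powerset.1 hpow) h1A), by omega⟩
      rw [← hF0eq] at hAY
      exact (mem_filter.1 hAY).1

end Glue

/-- for odd `n ≥ 7`, an almost-trivial family of subsets of `[n]` that is
both 3-wise intersecting and 3-intersecting satisfies `|F| ≤ |𝓕ₙ|`, with equality
iff `F = 𝓕ₙ`. -/
theorem stmt15 (n : ℕ) (hn : 7 ≤ n) (hodd : Odd n) (F : Finset (Finset ℕ))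
    (hF : FamilyOn n F) (h3w : ThreeWiseIntersecting F) (h3 : ThreeIntersecting F)
    (htriv : ∀ A ∈ F, A.card ≤ n - 3 → 1 ∈ A) :
    F.card ≤ (famF n).card ∧ (F.card = (famF n).card ↔ F = famF n) :=
  Stmt15.main n hn hodd F (fun A hA => hF A hA) (fun A hA B hB => h3 A hA B hB) htriv
    (famF n) rfl
end

section
/- Let n ≥ 8 be even and let 𝓕 be a family of subsets of [n] that is both 3-wise intersecting and 3-intersecting and is almost-trivial (every A ∈ 𝓕 with |A| ≤ n−3 contains 1). Then |𝓕| ≤ 2^(n−2) − C(n−2, (n−2)/2) + n; in particular |𝓕| < 2·|𝓕_{n−1}|. -/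
open Finset

namespace S16

lemma compress_of_mem {i j : ℕ} {A : Finset ℕ} (hj : j ∈ A) (hi : i ∉ A) :
    compress i j A = insert i (A.erase j) := if_pos ⟨hj, hi⟩

lemma compress_eq_self {i j : ℕ} {A : Finset ℕ} (h : ¬(j ∈ A ∧ i ∉ A)) :
    compress i j A = A := if_neg h

lemma compress_card (i j : ℕ) (A : Finset ℕ) : (compress i j A).card = A.card := by
  unfold compress
  split_ifs with h
  · rw [card_insert_of_notMem (fun hx => h.2 (mem_of_mem_erase hx)),
      card_erase_of_mem h.1]
    have : 0 < A.card := card_pos.2 ⟨j, h.1⟩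
    omega
  · rfl

lemma compress_subset_ground {n i j : ℕ} {A : Finset ℕ} (hA : A ⊆ Icc 1 n)
    (hi : 1 ≤ i) (hin : i ≤ n) : compress i j A ⊆ Icc 1 n := by
  unfold compress
  split_ifs with h
  · intro x hx
    rcases mem_insert.1 hx with rfl | hx
    · exact mem_Icc.2 ⟨hi, hin⟩
    · exact hA (erase_subset _ _ hx)
  · exact hA

lemma mem_compress_cases {i j x : ℕ} {A : Finset ℕ} (hx : x ∈ compress i j A) :
    x = i ∨ x ∈ A := by
  unfold compress at hx
  split_ifs at hx with h
  · rcases mem_insert.1 hx with rfl | hx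
    · exact Or.inl rfl
    · exact Or.inr (mem_of_mem_erase hx)
  · exact Or.inr hx

lemma mem_compress_of_mem {i j x : ℕ} {A : Finset ℕ} (hx : x ∈ A) (hxj : x ≠ j) :
    x ∈ compress i j A := by
  unfold compress
  split_ifs with h
  · exact mem_insert_of_mem (mem_erase.2 ⟨hxj, hx⟩)
  · exact hx

lemma compress_inj {i j : ℕ} {A B : Finset ℕ} (hij : i ≠ j)
    (hA : j ∈ A ∧ i ∉ A) (hB : j ∈ B ∧ i ∉ B)
    (h : compress i j A = compress i j B) : A = B := by
  rw [compress_of_mem hA.1 hA.2, compress_of_mem hB.1 hB.2] at h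
  have h2 : A.erase j = B.erase j := by
    have h3 := congrArg (fun s => Finset.erase s i) h
    simpa [erase_insert (fun hx => hA.2 (mem_of_mem_erase hx)),
      erase_insert (fun hx => hB.2 (mem_of_mem_erase hx))] using h3
  rw [← insert_erase hA.1, ← insert_erase hB.1, h2]

def CC (i j : ℕ) (G : Finset (Finset ℕ)) : Finset (Finset ℕ) :=
  G.filter (fun A => compress i j A ∈ G) ∪
    (G.filter (fun A => compress i j A ∉ G)).image (compress i j)

lemma mem_CC {i j : ℕ} {G : Finset (Finset ℕ)} {X : Finset ℕ} :
    X ∈ CC i j G ↔ (X ∈ G ∧ compress i j X ∈ G) ∨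
      ∃ A, A ∈ G ∧ compress i j A ∉ G ∧ compress i j A = X := by
  unfold CC
  simp only [mem_union, mem_filter, mem_image]
  tauto

lemma moved_of_not_mem {i j : ℕ} {G : Finset (Finset ℕ)} {A : Finset ℕ}
    (hA : A ∈ G) (h : compress i j A ∉ G) : j ∈ A ∧ i ∉ A := by
  by_contra hc
  rw [compress_eq_self hc] at h
  exact h hA

lemma CC_injOn {i j : ℕ} (hij : i < j) (G : Finset (Finset ℕ)) :
    ∀ x ∈ G.filter (fun A => compress i j A ∉ G),
    ∀ y ∈ G.filter (fun A => compress i j A ∉ G),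
      compress i j x = compress i j y → x = y := by
  intro x hx y hy h
  rw [mem_filter] at hx hy
  exact compress_inj (Nat.ne_of_lt hij) (moved_of_not_mem hx.1 hx.2)
    (moved_of_not_mem hy.1 hy.2) h

lemma CC_disj (i j : ℕ) (G : Finset (Finset ℕ)) :
    Disjoint (G.filter (fun A => compress i j A ∈ G))
      ((G.filter (fun A => compress i j A ∉ G)).image (compress i j)) := by
  rw [disjoint_right]
  intro X hX hX'
  obtain ⟨A, hA, hAX⟩ := mem_image.1 hX
  have h2 := (mem_filter.1 hA).2
  rw [hAX] at h2
  exact h2 (mem_filter.1 hX').1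

lemma card_CC (i j : ℕ) (hij : i < j) (G : Finset (Finset ℕ)) :
    (CC i j G).card = G.card := by
  have h1 : ((G.filter (fun A => compress i j A ∉ G)).image (compress i j)).card
      = (G.filter (fun A => compress i j A ∉ G)).card := by
    apply card_image_of_injOn
    intro x hx y hy h
    exact CC_injOn hij G x (by simpa using hx) y (by simpa using hy) h
  have h2 := card_filter_add_card_filter_not (s := G)
    (p := fun A => compress i j A ∈ G)
  rw [CC, card_union_of_disjoint (CC_disj i j G), h1]
  exact h2

lemma inter_card_compress_right {t i j : ℕ} {G : Finset (Finset ℕ)}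
    (hint : ∀ A ∈ G, ∀ B ∈ G, t ≤ (A ∩ B).card)
    {X A : Finset ℕ} (hX : X ∈ G) (hXc : compress i j X ∈ G)
    (hA : A ∈ G) (hjA : j ∈ A) (hiA : i ∉ A) :
    t ≤ (X ∩ compress i j A).card := by
  rw [compress_of_mem hjA hiA]
  by_cases hjX : j ∈ X
  · by_cases hiX : i ∈ X
    · have hsub : insert i ((X ∩ A).erase j) ⊆ X ∩ insert i (A.erase j) := by
        intro x hx
        rcases mem_insert.1 hx with rfl | hx
        · exact mem_inter.2 ⟨hiX, mem_insert_self _ _⟩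
        · obtain ⟨hxj, hxXA⟩ := mem_erase.1 hx
          exact mem_inter.2 ⟨(mem_inter.1 hxXA).1,
            mem_insert_of_mem (mem_erase.2 ⟨hxj, (mem_inter.1 hxXA).2⟩)⟩
      calc t ≤ (X ∩ A).card := hint X hX A hA
        _ ≤ ((X ∩ A).erase j).card + 1 := by
            rw [card_erase_of_mem (mem_inter.2 ⟨hjX, hjA⟩)]
            have : 0 < (X ∩ A).card := card_pos.2 ⟨j, mem_inter.2 ⟨hjX, hjA⟩⟩
            omega
        _ = (insert i ((X ∩ A).erase j)).card := by
            rw [card_insert_of_notMem (fun h => hiA (mem_inter.1 (mem_of_mem_erase h)).2)]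
        _ ≤ _ := card_le_card hsub
    · have h1 : t ≤ (compress i j X ∩ A).card := hint _ hXc A hA
      rw [compress_of_mem hjX hiX] at h1
      have h2 : insert i (X.erase j) ∩ A ⊆ (X ∩ A).erase j := by
        intro x hx
        obtain ⟨hx1, hx2⟩ := mem_inter.1 hx
        rcases mem_insert.1 hx1 with rfl | hx1
        · exact absurd hx2 hiA
        · exact mem_erase.2 ⟨(mem_erase.1 hx1).1,
            mem_inter.2 ⟨(mem_erase.1 hx1).2, hx2⟩⟩
      have h3 : (X ∩ A).erase j ⊆ X ∩ insert i (A.erase j) := by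
        intro x hx
        obtain ⟨hxj, hxXA⟩ := mem_erase.1 hx
        exact mem_inter.2 ⟨(mem_inter.1 hxXA).1,
          mem_insert_of_mem (mem_erase.2 ⟨hxj, (mem_inter.1 hxXA).2⟩)⟩
      exact le_trans h1 (le_trans (card_le_card h2) (card_le_card h3))
  · have hsub : X ∩ A ⊆ X ∩ insert i (A.erase j) := by
      intro x hx
      obtain ⟨hx1, hx2⟩ := mem_inter.1 hx
      exact mem_inter.2 ⟨hx1, mem_insert_of_mem
        (mem_erase.2 ⟨fun h => hjX (h ▸ hx1), hx2⟩)⟩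
    exact le_trans (hint X hX A hA) (card_le_card hsub)

lemma inter_card_compress_both {t i j : ℕ} {G : Finset (Finset ℕ)}
    (hint : ∀ A ∈ G, ∀ B ∈ G, t ≤ (A ∩ B).card)
    {A B : Finset ℕ} (hA : A ∈ G) (hB : B ∈ G)
    (hjA : j ∈ A) (hiA : i ∉ A) (hjB : j ∈ B) (hiB : i ∉ B) :
    t ≤ (compress i j A ∩ compress i j B).card := by
  rw [compress_of_mem hjA hiA, compress_of_mem hjB hiB]
  have hsub : insert i ((A ∩ B).erase j) ⊆ insert i (A.erase j) ∩ insert i (B.erase j) := by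
    intro x hx
    rcases mem_insert.1 hx with rfl | hx
    · exact mem_inter.2 ⟨mem_insert_self _ _, mem_insert_self _ _⟩
    · obtain ⟨hxj, hxAB⟩ := mem_erase.1 hx
      exact mem_inter.2 ⟨mem_insert_of_mem (mem_erase.2 ⟨hxj, (mem_inter.1 hxAB).1⟩),
        mem_insert_of_mem (mem_erase.2 ⟨hxj, (mem_inter.1 hxAB).2⟩)⟩
  calc t ≤ (A ∩ B).card := hint A hA B hB
    _ ≤ ((A ∩ B).erase j).card + 1 := by
        rw [card_erase_of_mem (mem_inter.2 ⟨hjA, hjB⟩)]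
        have : 0 < (A ∩ B).card := card_pos.2 ⟨j, mem_inter.2 ⟨hjA, hjB⟩⟩
        omega
    _ = (insert i ((A ∩ B).erase j)).card := by
        rw [card_insert_of_notMem (fun h => hiA (mem_inter.1 (mem_of_mem_erase h)).1)]
    _ ≤ _ := card_le_card hsub

lemma CC_intersecting {t i j : ℕ} {G : Finset (Finset ℕ)}
    (hint : ∀ A ∈ G, ∀ B ∈ G, t ≤ (A ∩ B).card) :
    ∀ X ∈ CC i j G, ∀ Y ∈ CC i j G, t ≤ (X ∩ Y).card := by
  intro X hX Y hY
  rcases mem_CC.1 hX with ⟨hX1, hX2⟩ | ⟨A, hA, hAc, rfl⟩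
  · rcases mem_CC.1 hY with ⟨hY1, hY2⟩ | ⟨B, hB, hBc, rfl⟩
    · exact hint X hX1 Y hY1
    · obtain ⟨hjB, hiB⟩ := moved_of_not_mem hB hBc
      exact inter_card_compress_right hint hX1 hX2 hB hjB hiB
  · obtain ⟨hjA, hiA⟩ := moved_of_not_mem hA hAc
    rcases mem_CC.1 hY with ⟨hY1, hY2⟩ | ⟨B, hB, hBc, rfl⟩
    · rw [inter_comm]
      exact inter_card_compress_right hint hY1 hY2 hA hjA hiA
    · obtain ⟨hjB, hiB⟩ := moved_of_not_mem hB hBc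
      exact inter_card_compress_both hint hA hB hjA hiA hjB hiB

lemma CC_subset_ground {n i j : ℕ} (hi : 1 ≤ i) (hij : i < j) (hj : j ≤ n)
    {G : Finset (Finset ℕ)} (hG : ∀ A ∈ G, A ⊆ Icc 1 n) :
    ∀ X ∈ CC i j G, X ⊆ Icc 1 n := by
  intro X hX
  rcases mem_CC.1 hX with ⟨h1, _⟩ | ⟨A, hA, _, rfl⟩
  · exact hG X h1
  · exact compress_subset_ground (hG A hA) hi (le_trans (le_of_lt hij) hj)

lemma CC_shape {i j : ℕ} {G : Finset (Finset ℕ)} :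
    ∀ X ∈ CC i j G, ∃ B ∈ G, X.card = B.card := by
  intro X hX
  rcases mem_CC.1 hX with ⟨h1, _⟩ | ⟨A, hA, _, rfl⟩
  · exact ⟨X, h1, rfl⟩
  · exact ⟨A, hA, compress_card i j A⟩

def mu (G : Finset (Finset ℕ)) : ℕ := ∑ A ∈ G, ∑ x ∈ A, x

lemma mu_CC_lt {i j : ℕ} (hij : i < j) {G : Finset (Finset ℕ)} {A₀ : Finset ℕ}
    (hA₀ : A₀ ∈ G) (hA₀c : compress i j A₀ ∉ G) :
    mu (CC i j G) < mu G := by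
  classical
  have hmoved : ∀ A ∈ G.filter (fun A => compress i j A ∉ G),
      (∑ x ∈ compress i j A, x) < ∑ x ∈ A, x := by
    intro A hA
    rw [mem_filter] at hA
    obtain ⟨hjA, hiA⟩ := moved_of_not_mem hA.1 hA.2
    rw [compress_of_mem hjA hiA,
      sum_insert (fun h => hiA (mem_of_mem_erase h))]
    have h2 : (∑ x ∈ A.erase j, x) + j = ∑ x ∈ A, x := sum_erase_add A _ hjA
    omega
  have himg : (∑ X ∈ (G.filter (fun A => compress i j A ∉ G)).image (compress i j),
      ∑ x ∈ X, x) = ∑ A ∈ G.filter (fun A => compress i j A ∉ G), ∑ x ∈ compress i j A, x :=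
    sum_image (fun x hx y hy h => CC_injOn hij G x hx y hy h)
  have hne : (G.filter (fun A => compress i j A ∉ G)).Nonempty :=
    ⟨A₀, mem_filter.2 ⟨hA₀, hA₀c⟩⟩
  have hlt : (∑ A ∈ G.filter (fun A => compress i j A ∉ G), ∑ x ∈ compress i j A, x) <
      ∑ A ∈ G.filter (fun A => compress i j A ∉ G), ∑ x ∈ A, x :=
    sum_lt_sum_of_nonempty hne hmoved
  have hsplit := sum_filter_add_sum_filter_not G (fun A => compress i j A ∈ G)
    (fun A => ∑ x ∈ A, x)
  unfold mu CC
  rw [sum_union (CC_disj i j G), himg]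
  omega

lemma exists_LC (n t : ℕ) (N : ℕ) : ∀ (G : Finset (Finset ℕ)), mu G ≤ N →
    (∀ A ∈ G, A ⊆ Icc 1 n) → (∀ A ∈ G, ∀ B ∈ G, t ≤ (A ∩ B).card) →
    ∃ G', G'.card = G.card ∧ (∀ A ∈ G', A ⊆ Icc 1 n) ∧
      (∀ A ∈ G', ∀ B ∈ G', t ≤ (A ∩ B).card) ∧ LeftCompressed n G' ∧
      (∀ A ∈ G', ∃ B ∈ G, A.card = B.card) := by
  induction N using Nat.strong_induction_on with
  | _ N ih =>
    intro G hmu hg hi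
    classical
    by_cases h : LeftCompressed n G
    · exact ⟨G, rfl, hg, hi, h, fun A hA => ⟨A, hA, rfl⟩⟩
    · unfold LeftCompressed at h
      push_neg at h
      obtain ⟨A, hA, i, j, hi1, hij, hjn, hc⟩ := h
      have hlt := mu_CC_lt hij hA hc
      obtain ⟨G', h1, h2, h3, h4, h5⟩ := ih (mu (CC i j G)) (by omega) (CC i j G) le_rfl
        (CC_subset_ground hi1 hij hjn hg) (CC_intersecting hi)
      refine ⟨G', h1.trans (card_CC i j hij G), h2, h3, h4, fun X hX => ?_⟩
      obtain ⟨B, hB, hxB⟩ := h5 X hX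
      obtain ⟨C, hC, hBC⟩ := CC_shape B hB
      exact ⟨C, hC, hxB.trans hBC⟩

/-! ### Slices -/

lemma compress_erase_comm {i j n : ℕ} (hij : i < j) (hjn : j < n) (S : Finset ℕ)
    (hnS : n ∈ S) : compress i j (S.erase n) = (compress i j S).erase n := by
  have hin : i ≠ n := by omega
  have hjn' : j ≠ n := by omega
  by_cases h : j ∈ S ∧ i ∉ S
  · have h' : j ∈ S.erase n ∧ i ∉ S.erase n :=
      ⟨mem_erase.2 ⟨hjn', h.1⟩, fun hx => h.2 (mem_of_mem_erase hx)⟩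
    rw [compress_of_mem h'.1 h'.2, compress_of_mem h.1 h.2]
    ext x
    simp only [mem_insert, mem_erase]
    constructor
    · rintro (rfl | ⟨h1, h2, h3⟩)
      · exact ⟨hin, Or.inl rfl⟩
      · exact ⟨h2, Or.inr ⟨h1, h3⟩⟩
    · rintro ⟨h1, rfl | ⟨h2, h3⟩⟩
      · exact Or.inl rfl
      · exact Or.inr ⟨h2, h1, h3⟩
  · have h' : ¬(j ∈ S.erase n ∧ i ∉ S.erase n) := by
      rintro ⟨h1, h2⟩
      exact h ⟨mem_of_mem_erase h1, fun hiS => h2 (mem_erase.2 ⟨hin, hiS⟩)⟩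
    rw [compress_eq_self h', compress_eq_self h]

variable {n a : ℕ} {A : Finset (Finset ℕ)}

def sliceLow (n : ℕ) (A : Finset (Finset ℕ)) : Finset (Finset ℕ) :=
  A.filter (fun S => n ∉ S)

def sliceLink (n : ℕ) (A : Finset (Finset ℕ)) : Finset (Finset ℕ) :=
  (A.filter (fun S => n ∈ S)).image (fun S => S.erase n)

lemma mem_sliceLink {T : Finset ℕ} :
    T ∈ sliceLink n A ↔ ∃ S, S ∈ A ∧ n ∈ S ∧ S.erase n = T := by
  unfold sliceLink
  simp only [mem_image, mem_filter]
  tauto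

lemma card_slice : A.card = (sliceLow n A).card + (sliceLink n A).card := by
  have h1 : (sliceLink n A).card = (A.filter (fun S => n ∈ S)).card := by
    apply card_image_of_injOn
    intro S hS T hT h
    simp only [coe_filter, Set.mem_setOf_eq] at hS hT
    have h' : S.erase n = T.erase n := h
    rw [← insert_erase hS.2, ← insert_erase hT.2, h']
  have h2 := card_filter_add_card_filter_not (s := A) (p := fun S => n ∈ S)
  unfold sliceLow
  omega

lemma sliceLow_ground (hg : ∀ S ∈ A, S ⊆ Icc 1 n) :
    ∀ S ∈ sliceLow n A, S ⊆ Icc 1 (n - 1) := by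
  intro S hS x hx
  simp only [sliceLow, mem_filter] at hS
  have h1 := mem_Icc.1 (hg S hS.1 hx)
  have h2 : x ≠ n := fun h => hS.2 (h ▸ hx)
  exact mem_Icc.2 ⟨h1.1, by omega⟩

lemma sliceLink_ground (hg : ∀ S ∈ A, S ⊆ Icc 1 n) :
    ∀ T ∈ sliceLink n A, T ⊆ Icc 1 (n - 1) := by
  intro T hT x hx
  obtain ⟨S, hS, hnS, rfl⟩ := mem_sliceLink.1 hT
  have h1 := mem_Icc.1 (hg S hS (mem_of_mem_erase hx))
  have h2 : x ≠ n := (mem_erase.1 hx).1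
  exact mem_Icc.2 ⟨h1.1, by omega⟩

lemma sliceLow_LC (hn : 1 ≤ n) (hc : LeftCompressed n A) :
    LeftCompressed (n - 1) (sliceLow n A) := by
  intro S hS i j hi hij hj
  simp only [sliceLow, mem_filter] at hS ⊢
  refine ⟨hc S hS.1 i j hi hij (by omega), fun hx => ?_⟩
  rcases mem_compress_cases hx with rfl | hx
  · omega
  · exact hS.2 hx

lemma sliceLink_LC (hn : 1 ≤ n) (hc : LeftCompressed n A) :
    LeftCompressed (n - 1) (sliceLink n A) := by
  intro T hT i j hi hij hj
  obtain ⟨S, hS, hnS, rfl⟩ := mem_sliceLink.1 hT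
  have hjn : j < n := by omega
  rw [compress_erase_comm hij hjn S hnS]
  exact mem_sliceLink.2 ⟨compress i j S, hc S hS i j hi hij (by omega),
    mem_compress_of_mem hnS (by omega), rfl⟩

lemma sliceLink_uniform (hu : ∀ S ∈ A, S.card = a) :
    ∀ T ∈ sliceLink n A, T.card = a - 1 := by
  intro T hT
  obtain ⟨S, hS, hnS, rfl⟩ := mem_sliceLink.1 hT
  rw [card_erase_of_mem hnS, hu S hS]

lemma sliceLink_intersecting (hna : 2 * a ≤ n)
    (hg : ∀ S ∈ A, S ⊆ Icc 1 n) (hu : ∀ S ∈ A, S.card = a)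
    (hi : ∀ S ∈ A, ∀ T ∈ A, (S ∩ T).Nonempty) (hc : LeftCompressed n A) :
    ∀ T₁ ∈ sliceLink n A, ∀ T₂ ∈ sliceLink n A, (T₁ ∩ T₂).Nonempty := by
  intro T₁ hT₁ T₂ hT₂
  obtain ⟨S₁, hS₁, hnS₁, rfl⟩ := mem_sliceLink.1 hT₁
  obtain ⟨S₂, hS₂, hnS₂, rfl⟩ := mem_sliceLink.1 hT₂
  by_contra hemp
  rw [not_nonempty_iff_eq_empty] at hemp
  have ha : 1 ≤ a := by
    have := hu S₁ hS₁
    have := card_pos.2 ⟨n, hnS₁⟩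
    omega
  have hsub : S₁.erase n ∪ S₂.erase n ⊆ Icc 1 (n - 1) := by
    intro x hx
    rcases mem_union.1 hx with hx | hx
    · exact sliceLink_ground hg _ hT₁ hx
    · exact sliceLink_ground hg _ hT₂ hx
  have hcard : (S₁.erase n ∪ S₂.erase n).card ≤ 2 * a - 2 := by
    have h1 := card_union_le (S₁.erase n) (S₂.erase n)
    rw [card_erase_of_mem hnS₁, card_erase_of_mem hnS₂, hu S₁ hS₁, hu S₂ hS₂] at h1
    omega
  have hex : (Icc 1 (n - 1) \ (S₁.erase n ∪ S₂.erase n)).Nonempty := by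
    rw [← card_pos, card_sdiff_of_subset hsub, Nat.card_Icc]
    omega
  obtain ⟨i, hiI⟩ := hex
  obtain ⟨hiIcc, hiout⟩ := mem_sdiff.1 hiI
  rw [mem_Icc] at hiIcc
  have hiT₁ : i ∉ S₁.erase n := fun h => hiout (mem_union_left _ h)
  have hiT₂ : i ∉ S₂.erase n := fun h => hiout (mem_union_right _ h)
  have hiS₁ : i ∉ S₁ := fun h => hiT₁ (mem_erase.2 ⟨by omega, h⟩)
  have hU : compress i n S₁ ∈ A := hc S₁ hS₁ i n hiIcc.1 (by omega) le_rfl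
  rw [compress_of_mem hnS₁ hiS₁] at hU
  obtain ⟨x, hx⟩ := hi _ hU S₂ hS₂
  obtain ⟨hx1, hx2⟩ := mem_inter.1 hx
  rcases mem_insert.1 hx1 with rfl | hx1
  · exact hiT₂ (mem_erase.2 ⟨by omega, hx2⟩)
  · have hxn : x ≠ n := (mem_erase.1 hx1).1
    have : x ∈ S₁.erase n ∩ S₂.erase n :=
      mem_inter.2 ⟨hx1, mem_erase.2 ⟨hxn, hx2⟩⟩
    rw [hemp] at this
    exact absurd this (notMem_empty x)

/-! ### Shadow lemma -/

lemma shadow_sized (hu : ∀ S ∈ A, S.card = a) :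
    ∀ B ∈ A.shadow, B.card = a - 1 := by
  intro B hB
  obtain ⟨S, hS, x, hx, rfl⟩ := mem_shadow_iff.1 hB
  rw [card_erase_of_mem hx, hu S hS]

lemma shadow_ground (hg : ∀ S ∈ A, S ⊆ Icc 1 n) :
    ∀ B ∈ A.shadow, B ⊆ Icc 1 n := by
  intro B hB
  obtain ⟨S, hS, x, hx, rfl⟩ := mem_shadow_iff.1 hB
  exact (erase_subset _ _).trans (hg S hS)

lemma shadow_dc (ha : 1 ≤ a) (hna : n + 1 ≤ 2 * a)
    (hg : ∀ S ∈ A, S ⊆ Icc 1 n) (hu : ∀ S ∈ A, S.card = a) :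
    A.card ≤ A.shadow.card := by
  classical
  have h := card_mul_le_card_mul (fun S B => B ⊆ S) (s := A) (t := A.shadow)
    (m := a) (n := n + 1 - a) ?_ ?_
  · have h2 : A.shadow.card * (n + 1 - a) ≤ A.shadow.card * a :=
      Nat.mul_le_mul le_rfl (by omega)
    exact Nat.le_of_mul_le_mul_right (le_trans h h2) (by omega)
  · intro S hS
    have hsub : S.image S.erase ⊆ (bipartiteAbove (fun S B => B ⊆ S) A.shadow S) := by
      intro B hB
      obtain ⟨x, hx, rfl⟩ := mem_image.1 hB
      rw [bipartiteAbove, mem_filter]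
      exact ⟨mem_shadow_iff.2 ⟨S, hS, x, hx, rfl⟩, erase_subset _ _⟩
    have hcardim : (S.image S.erase).card = a := by
      rw [card_image_of_injOn (erase_injOn S), hu S hS]
    rw [← hcardim]
    exact card_le_card hsub
  · intro B hB
    have hBcard : B.card = a - 1 := shadow_sized hu B hB
    obtain ⟨S₀, hS₀, x₀, hx₀, rfl⟩ := mem_shadow_iff.1 hB
    have hBg : S₀.erase x₀ ⊆ Icc 1 n := (erase_subset _ _).trans (hg S₀ hS₀)
    set B := S₀.erase x₀
    have hsub : (bipartiteBelow (fun S B => B ⊆ S) A B) ⊆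
        (Icc 1 n \ B).image (fun x => insert x B) := by
      intro S hS
      rw [bipartiteBelow, mem_filter] at hS
      obtain ⟨hSA, hBS⟩ := hS
      have hx : (S \ B).Nonempty := by
        rw [← card_pos, card_sdiff_of_subset hBS, hu S hSA, hBcard]
        omega
      obtain ⟨x, hx⟩ := hx
      obtain ⟨hxS, hxB⟩ := mem_sdiff.1 hx
      refine mem_image.2 ⟨x, mem_sdiff.2 ⟨hg S hSA hxS, hxB⟩, ?_⟩
      apply eq_of_subset_of_card_le ?_ ?_
      · intro y hy
        rcases mem_insert.1 hy with rfl | hy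
        · exact hxS
        · exact hBS hy
      · rw [card_insert_of_notMem hxB, hu S hSA, hBcard]
        omega
    calc (bipartiteBelow (fun S B => B ⊆ S) A B).card
        ≤ ((Icc 1 n \ B).image (fun x => insert x B)).card := card_le_card hsub
      _ ≤ (Icc 1 n \ B).card := card_image_le
      _ ≤ n + 1 - a := by
          rw [card_sdiff_of_subset hBg, Nat.card_Icc, hBcard]
          omega

lemma shadow_card_ge (n : ℕ) : ∀ (a : ℕ) (A : Finset (Finset ℕ)),
    (∀ S ∈ A, S ⊆ Icc 1 n) → (∀ S ∈ A, S.card = a) →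
    (∀ S ∈ A, ∀ T ∈ A, (S ∩ T).Nonempty) → LeftCompressed n A →
    A.card ≤ A.shadow.card := by
  induction n using Nat.strong_induction_on with
  | _ n ih =>
    intro a A hg hu hi hc
    rcases Nat.eq_zero_or_pos a with rfl | ha
    · rcases A.eq_empty_or_nonempty with rfl | ⟨S, hS⟩
      · simp
      · have hS0 : S = ∅ := card_eq_zero.1 (hu S hS)
        subst hS0
        obtain ⟨x, hx⟩ := hi ∅ hS ∅ hS
        simp at hx
    by_cases hn : n + 1 ≤ 2 * a
    · exact shadow_dc ha hn hg hu
    · have h2a : 2 * a ≤ n := by omega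
      have hn1 : 1 ≤ n := by omega
      have hA0 : (sliceLow n A).card ≤ (sliceLow n A).shadow.card := by
        refine ih (n - 1) (by omega) a (sliceLow n A) (sliceLow_ground hg) ?_ ?_
          (sliceLow_LC hn1 hc)
        · exact fun S hS => hu S (mem_filter.1 hS).1
        · exact fun S hS T hT => hi S (mem_filter.1 hS).1 T (mem_filter.1 hT).1
      have hL : (sliceLink n A).card ≤ (sliceLink n A).shadow.card :=
        ih (n - 1) (by omega) (a - 1) (sliceLink n A) (sliceLink_ground hg)
          (sliceLink_uniform hu) (sliceLink_intersecting h2a hg hu hi hc)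
          (sliceLink_LC hn1 hc)
      -- members of sliceLow-shadow and sliceLink-shadow avoid n
      have hlow_n : ∀ B ∈ (sliceLow n A).shadow, n ∉ B := by
        intro B hB hnB
        obtain ⟨S, hS, x, hx, rfl⟩ := mem_shadow_iff.1 hB
        exact (mem_filter.1 hS).2 (mem_of_mem_erase hnB)
      have hlink_n : ∀ B ∈ (sliceLink n A).shadow, n ∉ B := by
        intro B hB hnB
        obtain ⟨T, hT, x, hx, rfl⟩ := mem_shadow_iff.1 hB
        obtain ⟨S, hS, hnS, rfl⟩ := mem_sliceLink.1 hT
        exact (mem_erase.1 (mem_of_mem_erase hnB)).1 rfl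
      have hunion : (sliceLow n A).shadow ∪ ((sliceLink n A).shadow.image (insert n))
          ⊆ A.shadow := by
        intro X hX
        rcases mem_union.1 hX with hX | hX
        · exact shadow_monotone (filter_subset _ _) hX
        · obtain ⟨Y, hY, rfl⟩ := mem_image.1 hX
          obtain ⟨T, hT, y, hy, rfl⟩ := mem_shadow_iff.1 hY
          obtain ⟨S, hS, hnS, rfl⟩ := mem_sliceLink.1 (by exact hT)
          have hyn : y ≠ n := fun h => (mem_erase.1 (h ▸ hy)).1 rfl
          have heq : insert n ((S.erase n).erase y) = S.erase y := by
            rw [erase_right_comm]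
            exact insert_erase (mem_erase.2 ⟨fun h => hyn h.symm, hnS⟩)
          rw [heq]
          exact mem_shadow_iff.2 ⟨S, hS, y, mem_of_mem_erase hy, rfl⟩
      have hdisj : Disjoint ((sliceLow n A).shadow)
          ((sliceLink n A).shadow.image (insert n)) := by
        rw [disjoint_right]
        intro X hX hX'
        obtain ⟨Y, hY, rfl⟩ := mem_image.1 hX
        exact hlow_n _ hX' (mem_insert_self n Y)
      have hinj : ((sliceLink n A).shadow.image (insert n)).card
          = (sliceLink n A).shadow.card := by
        apply card_image_of_injOn
        intro X hX Y hY h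
        rw [mem_coe] at hX hY
        rw [← erase_insert (hlink_n X hX), ← erase_insert (hlink_n Y hY), h]
      calc A.card = (sliceLow n A).card + (sliceLink n A).card := card_slice
        _ ≤ (sliceLow n A).shadow.card + ((sliceLink n A).shadow.image (insert n)).card := by
            rw [hinj]; exact Nat.add_le_add hA0 hL
        _ = ((sliceLow n A).shadow ∪ ((sliceLink n A).shadow.image (insert n))).card :=
            (card_union_of_disjoint hdisj).symm
        _ ≤ A.shadow.card := card_le_card hunion

/-! ### EKR -/

lemma pascal' (m r : ℕ) (hr : 1 ≤ r) :
    (m + 1).choose r = m.choose (r - 1) + m.choose r := by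
  obtain ⟨r', rfl⟩ : ∃ r', r = r' + 1 := ⟨r - 1, by omega⟩
  simpa using Nat.choose_succ_succ' m r'

lemma empty_family (hu : ∀ S ∈ A, S.card = 0)
    (hi : ∀ S ∈ A, ∀ T ∈ A, (S ∩ T).Nonempty) : A = ∅ := by
  rcases A.eq_empty_or_nonempty with rfl | ⟨S, hS⟩
  · rfl
  · exfalso
    have hS0 : S = ∅ := card_eq_zero.1 (hu S hS)
    subst hS0
    obtain ⟨x, hx⟩ := hi ∅ hS ∅ hS
    simp at hx

lemma sdiff_injOn (n : ℕ) (B : Finset (Finset ℕ)) (hg : ∀ S ∈ B, S ⊆ Icc 1 n) :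
    ((B.image (fun S => Icc 1 n \ S)).card) = B.card := by
  apply card_image_of_injOn
  intro S hS T hT h
  rw [mem_coe] at hS hT
  have h1 : Icc 1 n \ (Icc 1 n \ S) = S := by
    rw [sdiff_sdiff_self_left, inter_eq_right.2 (hg S hS)]
  have h2 : Icc 1 n \ (Icc 1 n \ T) = T := by
    rw [sdiff_sdiff_self_left, inter_eq_right.2 (hg T hT)]
  have h' : Icc 1 n \ S = Icc 1 n \ T := h
  rw [← h1, ← h2, h']

lemma ekr_compressed (n : ℕ) : ∀ (k : ℕ) (A : Finset (Finset ℕ)), 2 * k ≤ n →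
    (∀ S ∈ A, S ⊆ Icc 1 n) → (∀ S ∈ A, S.card = k) →
    (∀ S ∈ A, ∀ T ∈ A, (S ∩ T).Nonempty) → LeftCompressed n A →
    A.card ≤ (n - 1).choose (k - 1) := by
  induction n using Nat.strong_induction_on with
  | _ n ih =>
    intro k A hkn hg hu hi hc
    rcases Nat.eq_zero_or_pos k with rfl | hk
    · rw [empty_family hu hi]
      simp
    rcases eq_or_lt_of_le hkn with heq | hlt
    · -- n = 2k : complement pairing
      have hpow : A ∪ A.image (fun S => Icc 1 n \ S) ⊆ powersetCard k (Icc 1 n) := by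
        intro X hX
        rcases mem_union.1 hX with hX | hX
        · exact mem_powersetCard.2 ⟨hg X hX, hu X hX⟩
        · obtain ⟨S, hS, rfl⟩ := mem_image.1 hX
          refine mem_powersetCard.2 ⟨sdiff_subset, ?_⟩
          rw [card_sdiff_of_subset (hg S hS), Nat.card_Icc, hu S hS]
          omega
      have hdisj : Disjoint A (A.image (fun S => Icc 1 n \ S)) := by
        rw [disjoint_right]
        intro X hX hX'
        obtain ⟨S, hS, rfl⟩ := mem_image.1 hX
        obtain ⟨x, hx⟩ := hi _ hX' S hS
        obtain ⟨hx1, hx2⟩ := mem_inter.1 hx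
        exact (mem_sdiff.1 hx1).2 hx2
      have hcard : A.card + A.card ≤ (2 * k).choose k := by
        have h1 := card_le_card hpow
        rw [card_union_of_disjoint hdisj, sdiff_injOn n A hg, card_powersetCard,
          Nat.card_Icc] at h1
        have h2 : n + 1 - 1 = 2 * k := by omega
        rwa [h2] at h1
      obtain ⟨k', rfl⟩ : ∃ k', k = k' + 1 := ⟨k - 1, by omega⟩
      have h3 : (2 * (k' + 1)).choose (k' + 1) = 2 * ((2 * k' + 1).choose k') := by
        have h4 : 2 * (k' + 1) = (2 * k' + 1) + 1 := by omega
        rw [h4, Nat.choose_succ_succ']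
        have h5 : (2 * k' + 1).choose (k' + 1) = (2 * k' + 1).choose k' := by
          have h6 := Nat.choose_symm (show k' + 1 ≤ 2 * k' + 1 by omega)
          have h7 : 2 * k' + 1 - (k' + 1) = k' := by omega
          rw [h7] at h6
          exact h6.symm
        omega
      have hgoal : n - 1 = 2 * k' + 1 := by omega
      rw [hgoal]
      simp only [Nat.add_sub_cancel]
      omega
    · -- 2k < n
      have hn1 : 1 ≤ n := by omega
      have hA0 : (sliceLow n A).card ≤ (n - 1 - 1).choose (k - 1) := by
        refine ih (n - 1) (by omega) k (sliceLow n A) (by omega) (sliceLow_ground hg) ?_ ?_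
          (sliceLow_LC hn1 hc)
        · exact fun S hS => hu S (mem_filter.1 hS).1
        · exact fun S hS T hT => hi S (mem_filter.1 hS).1 T (mem_filter.1 hT).1
      rcases Nat.eq_zero_or_pos (k - 1) with hk1 | hk1
      · -- k = 1
        have hkk : k = 1 := by omega
        have hL : sliceLink n A = ∅ := by
          apply empty_family (fun T hT => ?_) (sliceLink_intersecting (by omega) hg hu hi hc)
          rw [sliceLink_uniform hu T hT, hkk]
        have := card_slice (n := n) (A := A)
        rw [hL] at this
        simp at this
        rw [this]
        calc (sliceLow n A).card ≤ (n - 1 - 1).choose (k - 1) := hA0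
          _ ≤ (n - 1).choose (k - 1) := by
              rw [hkk]
              simp
      · have hL : (sliceLink n A).card ≤ (n - 1 - 1).choose (k - 1 - 1) :=
          ih (n - 1) (by omega) (k - 1) (sliceLink n A) (by omega)
            (sliceLink_ground hg) (sliceLink_uniform hu)
            (sliceLink_intersecting (by omega) hg hu hi hc) (sliceLink_LC hn1 hc)
        have hpas : (n - 1).choose (k - 1) =
            (n - 1 - 1).choose (k - 1 - 1) + (n - 1 - 1).choose (k - 1) := by
          have h1 := pascal' (n - 2) (k - 1) (by omega)
          have h2 : n - 2 + 1 = n - 1 := by omega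
          have h3 : n - 1 - 1 = n - 2 := by omega
          rw [h2] at h1
          rw [h3, h1]
        have := card_slice (n := n) (A := A)
        omega

lemma ekr (n k : ℕ) (hkn : 2 * k ≤ n) (A : Finset (Finset ℕ))
    (hg : ∀ S ∈ A, S ⊆ Icc 1 n) (hu : ∀ S ∈ A, S.card = k)
    (hi : ∀ S ∈ A, ∀ T ∈ A, (S ∩ T).Nonempty) :
    A.card ≤ (n - 1).choose (k - 1) := by
  have hint : ∀ S ∈ A, ∀ T ∈ A, 1 ≤ (S ∩ T).card :=
    fun S hS T hT => card_pos.2 (hi S hS T hT)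
  obtain ⟨G', hcard, hg', hint', hLC, hshape⟩ := exists_LC n 1 (mu A) A le_rfl hg hint
  have hu' : ∀ S ∈ G', S.card = k := by
    intro S hS
    obtain ⟨B, hB, h⟩ := hshape S hS
    rw [h, hu B hB]
  have h := ekr_compressed n k G' hkn hg' hu'
    (fun S hS T hT => card_pos.1 (hint' S hS T hT)) hLC
  omega
/-! ### Katona's theorem, odd ground, t = 2 -/

lemma katona {k : ℕ} (hk : 1 ≤ k) (G : Finset (Finset ℕ))
    (hg : ∀ A ∈ G, A ⊆ Icc 1 (2 * k + 1))
    (hint : ∀ A ∈ G, ∀ B ∈ G, 2 ≤ (A ∩ B).card) :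
    G.card + (2 * k).choose k ≤ 2 ^ (2 * k) := by
  classical
  obtain ⟨G', hcard, hg', hint', hLC, -⟩ := exists_LC (2 * k + 1) 2 (mu G) G le_rfl hg hint
  set m := 2 * k + 1 with hm
  set t : ℕ → ℕ := fun a => (G'.filter (fun A => A.card = a)).card with ht
  have hfib : G'.card = ∑ a ∈ Ico 0 (m + 1), t a := by
    rw [← range_eq_Ico]
    apply card_eq_sum_card_fiberwise
    intro A hA
    rw [mem_coe, mem_range]
    have h1 := card_le_card (hg' A hA)
    rw [Nat.card_Icc] at h1
    omega
  have hmem2 : ∀ A ∈ G', 2 ≤ A.card := by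
    intro A hA
    have h1 := hint' A hA A hA
    rwa [inter_self] at h1
  have ht01 : ∀ a, a < 2 → t a = 0 := by
    intro a ha
    rw [ht]
    apply card_eq_zero.2
    rw [filter_eq_empty_iff]
    intro A hA h
    have := hmem2 A hA
    omega
  have httop : t m ≤ 1 := by
    apply card_le_one.2
    intro A hA B hB
    rw [mem_filter] at hA hB
    have h1 : A = Icc 1 m := eq_of_subset_of_card_le (hg' A hA.1)
      (by rw [Nat.card_Icc]; omega)
    have h2 : B = Icc 1 m := eq_of_subset_of_card_le (hg' B hB.1)
      (by rw [Nat.card_Icc]; omega)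
    rw [h1, h2]
  have hlevel : ∀ a : ℕ, ∀ S ∈ G'.filter (fun A => A.card = a), S.card = a :=
    fun a S hS => (mem_filter.1 hS).2
  have hlevelg : ∀ a : ℕ, ∀ S ∈ G'.filter (fun A => A.card = a), S ⊆ Icc 1 m :=
    fun a S hS => hg' S (mem_filter.1 hS).1
  have hlevelLC : ∀ a : ℕ, LeftCompressed m (G'.filter (fun A => A.card = a)) := by
    intro a A hA i j h1 h2 h3
    rw [mem_filter] at hA ⊢
    exact ⟨hLC A hA.1 i j h1 h2 h3, by rw [compress_card, hA.2]⟩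
  have hpair : ∀ a, 2 ≤ a → a ≤ k → t a + t (2 * k + 2 - a) ≤ m.choose (2 * k + 2 - a) := by
    intro a ha2 hak
    set c := 2 * k + 2 - a with hc
    set Ga := G'.filter (fun A => A.card = a) with hGa
    set Gc := G'.filter (fun A => A.card = c) with hGc
    have hsh : Ga.card ≤ Ga.shadow.card := by
      refine shadow_card_ge m a Ga (hlevelg a) (hlevel a) (fun S hS T hT => ?_) (hlevelLC a)
      have := hint' S (mem_filter.1 hS).1 T (mem_filter.1 hT).1
      exact card_pos.1 (by omega)
    have hshg : ∀ B ∈ Ga.shadow, B ⊆ Icc 1 m := shadow_ground (hlevelg a)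
    have hsub : Ga.shadow.image (fun B => Icc 1 m \ B) ∪ Gc ⊆ powersetCard c (Icc 1 m) := by
      intro X hX
      rcases mem_union.1 hX with hX | hX
      · obtain ⟨B, hB, rfl⟩ := mem_image.1 hX
        refine mem_powersetCard.2 ⟨sdiff_subset, ?_⟩
        rw [card_sdiff_of_subset (hshg B hB), Nat.card_Icc, shadow_sized (hlevel a) B hB]
        omega
      · exact mem_powersetCard.2 ⟨hlevelg c X hX, hlevel c X hX⟩
    have hdisj : Disjoint (Ga.shadow.image (fun B => Icc 1 m \ B)) Gc := by
      rw [disjoint_right]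
      intro X hXc hXi
      obtain ⟨B, hB, rfl⟩ := mem_image.1 hXi
      obtain ⟨S, hSGa, y, hy, rfl⟩ := mem_shadow_iff.1 hB
      have hSG : S ∈ G' := (mem_filter.1 hSGa).1
      have hXG : Icc 1 m \ S.erase y ∈ G' := (mem_filter.1 hXc).1
      have h2 := hint' S hSG _ hXG
      have heq : S ∩ (Icc 1 m \ S.erase y) = S \ S.erase y := by
        ext x
        simp only [mem_inter, mem_sdiff]
        constructor
        · rintro ⟨h1, _, h3⟩; exact ⟨h1, h3⟩
        · rintro ⟨h1, h3⟩; exact ⟨h1, hg' S hSG h1, h3⟩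
      rw [heq] at h2
      have hcards : (S \ S.erase y).card = 1 := by
        rw [card_sdiff_of_subset (erase_subset _ _), card_erase_of_mem hy]
        have : 0 < S.card := card_pos.2 ⟨y, hy⟩
        omega
      omega
    have h1 := card_le_card hsub
    rw [card_union_of_disjoint hdisj, sdiff_injOn m Ga.shadow hshg, card_powersetCard,
      Nat.card_Icc] at h1
    have h2 : m + 1 - 1 = m := by omega
    rw [h2] at h1
    have h3 : t a ≤ Ga.shadow.card := hsh
    have h4 : t c = Gc.card := rfl
    omega
  have hek : t (k + 1) ≤ (2 * k).choose (k - 1) := by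
    set Gm := G'.filter (fun A => A.card = k + 1) with hGm
    set H := Gm.image (fun S => Icc 1 m \ S) with hH
    have hHcard : H.card = t (k + 1) := sdiff_injOn m Gm (hlevelg (k + 1))
    have hHu : ∀ X ∈ H, X.card = k := by
      intro X hX
      obtain ⟨S, hS, rfl⟩ := mem_image.1 hX
      rw [card_sdiff_of_subset (hlevelg (k + 1) S hS), Nat.card_Icc, hlevel (k + 1) S hS]
      omega
    have hHg : ∀ X ∈ H, X ⊆ Icc 1 m := by
      intro X hX
      obtain ⟨S, hS, rfl⟩ := mem_image.1 hX
      exact sdiff_subset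
    have hHi : ∀ X ∈ H, ∀ Y ∈ H, (X ∩ Y).Nonempty := by
      intro X hX Y hY
      obtain ⟨S, hS, rfl⟩ := mem_image.1 hX
      obtain ⟨T, hT, rfl⟩ := mem_image.1 hY
      have h2 := hint' S (mem_filter.1 hS).1 T (mem_filter.1 hT).1
      have heq : (Icc 1 m \ S) ∩ (Icc 1 m \ T) = Icc 1 m \ (S ∪ T) := by
        ext x
        simp only [mem_inter, mem_sdiff, mem_union]
        tauto
      rw [← card_pos, heq, card_sdiff_of_subset (union_subset (hlevelg _ S hS) (hlevelg _ T hT)),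
        Nat.card_Icc]
      have h3 := card_union_add_card_inter S T
      rw [hlevel _ S hS, hlevel _ T hT] at h3
      omega
    have h5 := ekr m k (by omega) H hHg hHu hHi
    have hm1 : m - 1 = 2 * k := by omega
    rw [hm1] at h5
    omega
  -- sum splitting
  have hc1 : (∑ a ∈ Ico 0 2, t a) + ∑ a ∈ Ico 2 (m + 1), t a = ∑ a ∈ Ico 0 (m + 1), t a :=
    sum_Ico_consecutive t (by omega) (by omega)
  have hc2 : (∑ a ∈ Ico 2 (k + 1), t a) + ∑ a ∈ Ico (k + 1) (m + 1), t a
      = ∑ a ∈ Ico 2 (m + 1), t a := sum_Ico_consecutive t (by omega) (by omega)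
  have hc3 : (∑ a ∈ Ico (k + 1) (k + 2), t a) + ∑ a ∈ Ico (k + 2) (m + 1), t a
      = ∑ a ∈ Ico (k + 1) (m + 1), t a := sum_Ico_consecutive t (by omega) (by omega)
  have hc4 : (∑ a ∈ Ico (k + 2) (2 * k + 1), t a) + ∑ a ∈ Ico (2 * k + 1) (m + 1), t a
      = ∑ a ∈ Ico (k + 2) (m + 1), t a := sum_Ico_consecutive t (by omega) (by omega)
  have hsing : ∀ x : ℕ, Ico x (x + 1) = {x} := by
    intro x
    ext y
    simp only [mem_Ico, mem_singleton]
    omega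
  have hs1 : ∑ a ∈ Ico 0 2, t a = 0 := by
    apply sum_eq_zero
    intro a ha
    exact ht01 a (by have := (mem_Ico.1 ha).2; omega)
  have hs3 : ∑ a ∈ Ico (k + 1) (k + 2), t a = t (k + 1) := by
    rw [hsing (k + 1), sum_singleton]
  have hs5 : ∑ a ∈ Ico (2 * k + 1) (m + 1), t a = t (2 * k + 1) := by
    have : m + 1 = (2 * k + 1) + 1 := rfl
    rw [this, hsing (2 * k + 1), sum_singleton]
  have hs4 : ∑ c ∈ Ico (k + 2) (2 * k + 1), t c = ∑ a ∈ Ico 2 (k + 1), t (2 * k + 2 - a) := by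
    refine sum_nbij' (fun c => 2 * k + 2 - c) (fun a => 2 * k + 2 - a) ?_ ?_ ?_ ?_ ?_
    · intro c hc
      simp only [mem_Ico] at hc ⊢
      omega
    · intro a ha
      simp only [mem_Ico] at ha ⊢
      omega
    · intro c hc
      simp only [mem_Ico] at hc
      show 2 * k + 2 - (2 * k + 2 - c) = c
      omega
    · intro a ha
      simp only [mem_Ico] at ha
      show 2 * k + 2 - (2 * k + 2 - a) = a
      omega
    · intro c hc
      simp only [mem_Ico] at hc
      show t c = t (2 * k + 2 - (2 * k + 2 - c))
      exact congrArg t (by omega)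
  have hs24 : (∑ a ∈ Ico 2 (k + 1), t a) + ∑ c ∈ Ico (k + 2) (2 * k + 1), t c
      ≤ ∑ c ∈ Ico (k + 2) (2 * k + 1), m.choose c := by
    have hre : ∑ c ∈ Ico (k + 2) (2 * k + 1), m.choose c
        = ∑ a ∈ Ico 2 (k + 1), m.choose (2 * k + 2 - a) := by
      refine sum_nbij' (fun c => 2 * k + 2 - c) (fun a => 2 * k + 2 - a) ?_ ?_ ?_ ?_ ?_
      · intro c hc
        simp only [mem_Ico] at hc ⊢
        omega
      · intro a ha
        simp only [mem_Ico] at ha ⊢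
        omega
      · intro c hc
        simp only [mem_Ico] at hc
        show 2 * k + 2 - (2 * k + 2 - c) = c
        omega
      · intro a ha
        simp only [mem_Ico] at ha
        show 2 * k + 2 - (2 * k + 2 - a) = a
        omega
      · intro c hc
        simp only [mem_Ico] at hc
        show m.choose c = m.choose (2 * k + 2 - (2 * k + 2 - c))
        exact congrArg m.choose (by omega)
    rw [hs4, hre, ← sum_add_distrib]
    apply sum_le_sum
    intro a ha
    rw [mem_Ico] at ha
    exact hpair a ha.1 (by omega)
  -- numeric identities
  have hN1 : ∑ c ∈ Ico 0 (k + 1), m.choose c = 4 ^ k := by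
    rw [← range_eq_Ico]
    exact Nat.sum_range_choose_halfway k
  have hN2 : ∑ c ∈ Ico 0 (m + 1), m.choose c = 2 ^ (2 * k + 1) := by
    rw [← range_eq_Ico]
    exact Nat.sum_range_choose (2 * k + 1)
  have hN3 : (∑ c ∈ Ico 0 (k + 1), m.choose c) + ∑ c ∈ Ico (k + 1) (m + 1), m.choose c
      = ∑ c ∈ Ico 0 (m + 1), m.choose c := sum_Ico_consecutive _ (by omega) (by omega)
  have hN4 : (∑ c ∈ Ico (k + 1) (k + 2), m.choose c) + ∑ c ∈ Ico (k + 2) (m + 1), m.choose c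
      = ∑ c ∈ Ico (k + 1) (m + 1), m.choose c := sum_Ico_consecutive _ (by omega) (by omega)
  have hN5 : (∑ c ∈ Ico (k + 2) (2 * k + 1), m.choose c) + ∑ c ∈ Ico (2 * k + 1) (m + 1), m.choose c
      = ∑ c ∈ Ico (k + 2) (m + 1), m.choose c := sum_Ico_consecutive _ (by omega) (by omega)
  have hN6 : ∑ c ∈ Ico (k + 1) (k + 2), m.choose c = m.choose (k + 1) := by
    rw [hsing (k + 1), sum_singleton]
  have hN7 : ∑ c ∈ Ico (2 * k + 1) (m + 1), m.choose c = 1 := by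
    have h1 : m + 1 = (2 * k + 1) + 1 := rfl
    rw [h1, hsing (2 * k + 1), sum_singleton]
    exact Nat.choose_self m
  have hpasc : m.choose (k + 1) = (2 * k).choose k + (2 * k).choose (k + 1) :=
    Nat.choose_succ_succ' (2 * k) k
  have hsymm : (2 * k).choose (k + 1) = (2 * k).choose (k - 1) := by
    have h6 := Nat.choose_symm (show k + 1 ≤ 2 * k by omega)
    have h7 : 2 * k - (k + 1) = k - 1 := by omega
    rw [h7] at h6
    exact h6.symm
  have hpow1 : (2 : ℕ) ^ (2 * k + 1) = 2 ^ (2 * k) * 2 := pow_succ 2 (2 * k)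
  have hpow2 : (4 : ℕ) ^ k = 2 ^ (2 * k) := by
    rw [show (4 : ℕ) = 2 ^ 2 from rfl, ← pow_mul]
  have httop' : t (2 * k + 1) ≤ 1 := httop
  rw [← hcard]
  omega

/-! ### Counting famF -/

lemma famF_card (k : ℕ) (hk : 1 ≤ k) :
    2 * (famF (2 * k + 1)).card + (2 * k).choose k = 2 ^ (2 * k) + 2 * (2 * k + 1) := by
  classical
  set m := 2 * k + 1 with hm
  set X := (famF m).filter (fun A => 1 ∈ A) with hX
  set Y := (famF m).filter (fun A => 1 ∉ A) with hY
  have hXY : X.card + Y.card = (famF m).card :=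
    card_filter_add_card_filter_not (p := fun A => 1 ∈ A)
  have hIcc2 : (Icc 2 m).card = 2 * k := by
    rw [Nat.card_Icc]
    omega
  have hsub12 : ∀ A : Finset ℕ, (A ⊆ Icc 1 m ∧ 1 ∉ A) ↔ A ⊆ Icc 2 m := by
    intro A
    constructor
    · rintro ⟨h1, h2⟩ x hx
      have h3 := mem_Icc.1 (h1 hx)
      have h4 : x ≠ 1 := fun h => h2 (h ▸ hx)
      exact mem_Icc.2 ⟨by omega, h3.2⟩
    · intro h1
      constructor
      · intro x hx
        have h3 := mem_Icc.1 (h1 hx)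
        exact mem_Icc.2 ⟨by omega, h3.2⟩
      · intro h2
        have h3 := mem_Icc.1 (h1 h2)
        omega
  have hmemX : ∀ A : Finset ℕ, A ∈ X ↔ A ⊆ Icc 1 m ∧ 1 ∈ A ∧ k + 2 ≤ A.card := by
    intro A
    rw [hX, mem_filter]
    simp only [famF, ground, mem_filter, mem_powerset]
    constructor
    · rintro ⟨⟨hp, hor⟩, h1⟩
      refine ⟨hp, h1, ?_⟩
      rcases hor with ⟨-, hcard⟩ | ⟨h1', -⟩
      · omega
      · exact absurd h1 h1'
    · rintro ⟨hp, h1, hcard⟩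
      exact ⟨⟨hp, Or.inl ⟨h1, by omega⟩⟩, h1⟩
  have hmemY : ∀ A : Finset ℕ, A ∈ Y ↔ A ⊆ Icc 2 m ∧ 2 * k - 1 ≤ A.card := by
    intro A
    rw [hY, mem_filter]
    simp only [famF, ground, mem_filter, mem_powerset]
    constructor
    · rintro ⟨⟨hp, hor⟩, h1⟩
      refine ⟨(hsub12 A).1 ⟨hp, h1⟩, ?_⟩
      rcases hor with ⟨h1', -⟩ | ⟨-, hcard⟩
      · exact absurd h1' h1
      · omega
    · rintro ⟨hp, hcard⟩
      obtain ⟨h1, h2⟩ := (hsub12 A).2 hp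
      exact ⟨⟨h1, Or.inr ⟨h2, by omega⟩⟩, h2⟩
  -- Y count
  have hYeq : Y = powersetCard (2 * k - 1) (Icc 2 m) ∪ powersetCard (2 * k) (Icc 2 m) := by
    ext A
    rw [hmemY A]
    simp only [mem_union, mem_powersetCard]
    constructor
    · rintro ⟨hsub, hcard⟩
      have hup : A.card ≤ 2 * k := by
        have := card_le_card hsub
        omega
      have : A.card = 2 * k - 1 ∨ A.card = 2 * k := by omega
      rcases this with h | h
      · exact Or.inl ⟨hsub, h⟩
      · exact Or.inr ⟨hsub, h⟩
    · rintro (⟨h1, h2⟩ | ⟨h1, h2⟩) <;> exact ⟨h1, by omega⟩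
  have hYcard : Y.card = 2 * k + 1 := by
    have hdisjY : Disjoint (powersetCard (2 * k - 1) (Icc 2 m)) (powersetCard (2 * k) (Icc 2 m)) := by
      rw [disjoint_left]
      intro A h1 h2
      have c1 := (mem_powersetCard.1 h1).2
      have c2 := (mem_powersetCard.1 h2).2
      omega
    rw [hYeq, card_union_of_disjoint hdisjY, card_powersetCard, card_powersetCard, hIcc2]
    have h2 : (2 * k).choose (2 * k) = 1 := Nat.choose_self _
    have h3 : (2 * k).choose (2 * k - 1) = 2 * k := by
      have h4 := Nat.choose_symm (show 1 ≤ 2 * k by omega)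
      rw [Nat.choose_one_right] at h4
      exact h4
    omega
  -- X count
  set Z := (Icc 2 m).powerset.filter (fun S => k + 1 ≤ S.card) with hZ
  have hXeq : X = Z.image (insert 1) := by
    ext A
    rw [hmemX A]
    simp only [mem_image, hZ, mem_filter, mem_powerset]
    constructor
    · rintro ⟨hsub, h1, hcard⟩
      refine ⟨A.erase 1, ⟨?_, ?_⟩, insert_erase h1⟩
      · intro x hx
        have h2 := mem_Icc.1 (hsub (mem_of_mem_erase hx))
        have h3 : x ≠ 1 := (mem_erase.1 hx).1
        exact mem_Icc.2 ⟨by omega, h2.2⟩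
      · rw [card_erase_of_mem h1]
        omega
    · rintro ⟨S, ⟨hS1, hS2⟩, rfl⟩
      have h1S : 1 ∉ S := by
        intro h
        have := mem_Icc.1 (hS1 h)
        omega
      refine ⟨?_, mem_insert_self _ _, ?_⟩
      · intro x hx
        rcases mem_insert.1 hx with rfl | hx
        · exact mem_Icc.2 ⟨le_refl 1, by omega⟩
        · have h2 := mem_Icc.1 (hS1 hx)
          exact mem_Icc.2 ⟨by omega, h2.2⟩
      · rw [card_insert_of_notMem h1S]
        omega
  have hXcard : X.card = Z.card := by
    rw [hXeq]
    apply card_image_of_injOn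
    intro S hS T hT h
    rw [mem_coe, hZ, mem_filter, mem_powerset] at hS hT
    have h1S : 1 ∉ S := by
      intro h1
      have := mem_Icc.1 (hS.1 h1)
      omega
    have h1T : 1 ∉ T := by
      intro h1
      have := mem_Icc.1 (hT.1 h1)
      omega
    have h' : insert 1 S = insert 1 T := h
    rw [← erase_insert h1S, ← erase_insert h1T, h']
  have hZcard : Z.card = ∑ j ∈ Ico (k + 1) (2 * k + 1), (2 * k).choose j := by
    have h1 : Z.card = ∑ j ∈ Ico (k + 1) (2 * k + 1), (Z.filter (fun S => S.card = j)).card := by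
      apply card_eq_sum_card_fiberwise
      intro S hS
      simp only [mem_coe, hZ, mem_filter, mem_powerset] at hS
      have := card_le_card hS.1
      rw [mem_coe, mem_Ico]
      omega
    rw [h1]
    apply sum_congr rfl
    intro j hj
    rw [mem_Ico] at hj
    have h2 : Z.filter (fun S => S.card = j) = powersetCard j (Icc 2 m) := by
      ext S
      rw [mem_filter, hZ, mem_filter, mem_powerset, mem_powersetCard]
      constructor
      · rintro ⟨⟨h3, h4⟩, h5⟩
        exact ⟨h3, h5⟩
      · rintro ⟨h3, h4⟩
        exact ⟨⟨h3, by omega⟩, h4⟩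
    rw [h2, card_powersetCard, hIcc2]
  -- reflection identity
  have hrefl : ∑ j ∈ Ico 0 k, (2 * k).choose j = ∑ j ∈ Ico (k + 1) (2 * k + 1), (2 * k).choose j := by
    refine sum_nbij' (fun j => 2 * k - j) (fun j => 2 * k - j) ?_ ?_ ?_ ?_ ?_
    · intro j hj
      simp only [mem_Ico] at hj ⊢
      omega
    · intro j hj
      simp only [mem_Ico] at hj ⊢
      omega
    · intro j hj
      simp only [mem_Ico] at hj
      show 2 * k - (2 * k - j) = j
      omega
    · intro j hj
      simp only [mem_Ico] at hj
      show 2 * k - (2 * k - j) = j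
      omega
    · intro j hj
      simp only [mem_Ico] at hj
      show (2 * k).choose j = (2 * k).choose (2 * k - j)
      exact (Nat.choose_symm (by omega)).symm
  have hc1 : (∑ j ∈ Ico 0 k, (2 * k).choose j) + ∑ j ∈ Ico k (k + 1), (2 * k).choose j
      = ∑ j ∈ Ico 0 (k + 1), (2 * k).choose j := sum_Ico_consecutive _ (by omega) (by omega)
  have hc2 : (∑ j ∈ Ico 0 (k + 1), (2 * k).choose j) + ∑ j ∈ Ico (k + 1) (2 * k + 1), (2 * k).choose j
      = ∑ j ∈ Ico 0 (2 * k + 1), (2 * k).choose j := sum_Ico_consecutive _ (by omega) (by omega)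
  have hsing : Ico k (k + 1) = {k} := by
    ext y
    simp only [mem_Ico, mem_singleton]
    omega
  have hmid : ∑ j ∈ Ico k (k + 1), (2 * k).choose j = (2 * k).choose k := by
    rw [hsing, sum_singleton]
  have htot : ∑ j ∈ Ico 0 (2 * k + 1), (2 * k).choose j = 2 ^ (2 * k) := by
    rw [← range_eq_Ico]
    exact Nat.sum_range_choose (2 * k)
  omega

end S16

open S16

/-- for even `n ≥ 8`, an almost-trivial family of subsets of `[n]` that is
both 3-wise intersecting and 3-intersecting satisfies
`|F| ≤ 2^(n-2) - C(n-2,(n-2)/2) + n`; in particular `|F| < 2·|𝓕_{n-1}|`. -/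

theorem stmt16 (n : ℕ) (hn : 8 ≤ n) (heven : Even n) (F : Finset (Finset ℕ))
    (hF : FamilyOn n F) (h3w : ThreeWiseIntersecting F) (h3 : ThreeIntersecting F)
    (htriv : ∀ A ∈ F, A.card ≤ n - 3 → 1 ∈ A) :
    ((F.card : ℚ) ≤ 2 ^ (n - 2) - (Nat.choose (n - 2) ((n - 2) / 2) : ℚ) + n) ∧
    F.card < 2 * (famF (n - 1)).card := by
  classical
  obtain ⟨r, hr⟩ := heven
  set k := r - 1 with hkdef
  have hnk : n = 2 * k + 2 := by omega
  have hk3 : 3 ≤ k := by omega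
  have hFg : ∀ A ∈ F, A ⊆ Icc 1 n := hF
  have h3' : ∀ A ∈ F, ∀ B ∈ F, 3 ≤ (A ∩ B).card := h3
  set F1 := F.filter (fun A => 1 ∈ A) with hF1
  set F0 := F.filter (fun A => 1 ∉ A) with hF0
  have hsplitF : F1.card + F0.card = F.card :=
    card_filter_add_card_filter_not (p := fun A => 1 ∈ A)
  -- F0 bound
  have hF0card : F0.card ≤ n := by
    have hsub : F0 ⊆ powersetCard (n - 2) (Icc 2 n) ∪ powersetCard (n - 1) (Icc 2 n) := by
      intro A hA
      rw [hF0, mem_filter] at hA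
      obtain ⟨hAF, h1A⟩ := hA
      have hAg : A ⊆ Icc 2 n := by
        intro x hx
        have h2 := mem_Icc.1 (hFg A hAF hx)
        have h3x : x ≠ 1 := fun h => h1A (h ▸ hx)
        exact mem_Icc.2 ⟨by omega, h2.2⟩
      have hca : n - 2 ≤ A.card := by
        by_contra hcon
        push_neg at hcon
        exact h1A (htriv A hAF (by omega))
      have hcb : A.card ≤ n - 1 := by
        have := card_le_card hAg
        rw [Nat.card_Icc] at this
        omega
      have : A.card = n - 2 ∨ A.card = n - 1 := by omega
      rcases this with h | h
      · exact mem_union_left _ (mem_powersetCard.2 ⟨hAg, h⟩)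
      · exact mem_union_right _ (mem_powersetCard.2 ⟨hAg, h⟩)
    calc F0.card ≤ _ := card_le_card hsub
      _ ≤ (powersetCard (n - 2) (Icc 2 n)).card + (powersetCard (n - 1) (Icc 2 n)).card :=
          card_union_le _ _
      _ ≤ n := by
          rw [card_powersetCard, card_powersetCard, Nat.card_Icc]
          have h1 : n + 1 - 2 = n - 1 := by omega
          rw [h1]
          have h2 : (n - 1).choose (n - 1) = 1 := Nat.choose_self _
          have h3c : (n - 1).choose (n - 2) = n - 1 := by
            have h4 := Nat.choose_symm (show 1 ≤ n - 1 by omega)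
            rw [Nat.choose_one_right] at h4
            have h5 : n - 1 - 1 = n - 2 := by omega
            rw [h5] at h4
            exact h4
          omega
  -- F1 via Katona
  set G0 := F1.image (fun A => A.erase 1) with hG0
  have hF1mem : ∀ A ∈ F1, A ∈ F ∧ 1 ∈ A := fun A hA => mem_filter.1 hA
  have hG0card : G0.card = F1.card := by
    apply card_image_of_injOn
    intro A hA B hB h
    rw [mem_coe] at hA hB
    obtain ⟨-, h1A⟩ := hF1mem A hA
    obtain ⟨-, h1B⟩ := hF1mem B hB
    have h' : A.erase 1 = B.erase 1 := h
    rw [← insert_erase h1A, ← insert_erase h1B, h']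
  have hG0g : ∀ S ∈ G0, S ⊆ Icc 2 n := by
    intro S hS
    obtain ⟨A, hA, rfl⟩ := mem_image.1 hS
    obtain ⟨hAF, -⟩ := hF1mem A hA
    intro x hx
    have h2 := mem_Icc.1 (hFg A hAF (mem_of_mem_erase hx))
    have h3x : x ≠ 1 := (mem_erase.1 hx).1
    exact mem_Icc.2 ⟨by omega, h2.2⟩
  have hG0int : ∀ S ∈ G0, ∀ T ∈ G0, 2 ≤ (S ∩ T).card := by
    intro S hS T hT
    obtain ⟨A, hA, rfl⟩ := mem_image.1 hS
    obtain ⟨B, hB, rfl⟩ := mem_image.1 hT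
    obtain ⟨hAF, h1A⟩ := hF1mem A hA
    obtain ⟨hBF, h1B⟩ := hF1mem B hB
    have heq : A.erase 1 ∩ B.erase 1 = (A ∩ B).erase 1 := by
      ext x
      simp only [mem_inter, mem_erase]
      tauto
    rw [heq, card_erase_of_mem (mem_inter.2 ⟨h1A, h1B⟩)]
    have := h3' A hAF B hBF
    omega
  set f : ℕ → ℕ := fun x => x - 1 with hf
  set G1 := G0.image (fun S => S.image f) with hG1
  have hrecover : ∀ S : Finset ℕ, S ⊆ Icc 2 n → (S.image f).image (fun x => x + 1) = S := by
    intro S hS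
    rw [image_image]
    have h1 : ∀ x ∈ S, ((fun x => x + 1) ∘ f) x = id x := by
      intro x hx
      have := mem_Icc.1 (hS hx)
      simp only [Function.comp_apply, hf, id_eq]
      omega
    rw [image_congr h1, image_id]
  have hG1card : G1.card = G0.card := by
    apply card_image_of_injOn
    intro S hS T hT h
    rw [mem_coe] at hS hT
    have h' : S.image f = T.image f := h
    rw [← hrecover S (hG0g S hS), ← hrecover T (hG0g T hT), h']
  have hG1g : ∀ S ∈ G1, S ⊆ Icc 1 (2 * k + 1) := by
    intro S hS
    obtain ⟨T, hT, rfl⟩ := mem_image.1 hS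
    intro x hx
    obtain ⟨y, hy, rfl⟩ := mem_image.1 hx
    have := mem_Icc.1 (hG0g T hT hy)
    simp only [hf]
    refine mem_Icc.2 ⟨by omega, by omega⟩
  have hG1int : ∀ S ∈ G1, ∀ T ∈ G1, 2 ≤ (S ∩ T).card := by
    intro S' hS' T' hT'
    obtain ⟨S, hS, rfl⟩ := mem_image.1 hS'
    obtain ⟨T, hT, rfl⟩ := mem_image.1 hT'
    have hsub : (S ∩ T).image f ⊆ S.image f ∩ T.image f := by
      intro x hx
      obtain ⟨y, hy, rfl⟩ := mem_image.1 hx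
      obtain ⟨hy1, hy2⟩ := mem_inter.1 hy
      exact mem_inter.2 ⟨mem_image_of_mem f hy1, mem_image_of_mem f hy2⟩
    have hinj : ((S ∩ T).image f).card = (S ∩ T).card := by
      apply card_image_of_injOn
      intro x hx y hy hxy
      rw [mem_coe, mem_inter] at hx hy
      have hx2 := mem_Icc.1 (hG0g S hS hx.1)
      have hy2 := mem_Icc.1 (hG0g S hS hy.1)
      rw [hf] at hxy
      simp only at hxy
      omega
    have h2 := hG0int S hS T hT
    calc 2 ≤ ((S ∩ T).image f).card := by omega
      _ ≤ _ := card_le_card hsub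
  have hkat := katona (show 1 ≤ k by omega) G1 hG1g hG1int
  have hmaink : F.card + (2 * k).choose k ≤ 2 ^ (2 * k) + n := by omega
  have hfam := famF_card k (by omega)
  constructor
  · have h1 : n - 2 = 2 * k := by omega
    have h2 : (n - 2) / 2 = k := by omega
    have h3q : F.card + (n - 2).choose ((n - 2) / 2) ≤ 2 ^ (n - 2) + n := by
      rw [h2, h1]
      exact hmaink
    have h4 := (Nat.cast_le (α := ℚ)).2 h3q
    push_cast at h4
    linarith
  · have hn1 : n - 1 = 2 * k + 1 := by omega
    rw [hn1]
    omega
end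

section
/- Let n ≥ 1 and let 𝓕 be a nonempty left-compressed up-set of subsets of [n] with ∅ ∉ 𝓕, and let 𝓖 be the set of minimal elements of 𝓕. Then |𝓕| = Σ_{E ∈ 𝓖} 2^(n − max(E)), where max(E) denotes the largest element of E. -/
open Finset

/-- if `F` is a nonempty left-compressed up-set of subsets of `[n]` with
`∅ ∉ F`, and `G` is its set of minimal elements, then
`|F| = Σ_{E ∈ G} 2^(n - max E)`. -/
theorem stmt17 (n : ℕ) (hn : 1 ≤ n) (F : Finset (Finset ℕ))
    (hF : FamilyOn n F) (hup : UpSetOn n F) (hlc : LeftCompressed n F)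
    (hne : F.Nonempty) (hemp : ∅ ∉ F) :
    F.card = ∑ E ∈ F.filter (fun A => ∀ B ∈ F, ¬ B ⊂ A), 2 ^ (n - E.sup id) := by
  classical
  have hground : ∀ A ∈ F, ∀ x ∈ A, 1 ≤ x ∧ x ≤ n := by
    intro A hA x hx
    have := hF A hA hx
    simp only [ground, Finset.mem_Icc] at this
    exact this
  have hexists : ∀ A ∈ F, ({k | A ∩ Finset.Icc 1 k ∈ F} : Set ℕ).Nonempty := by
    intro A hA
    refine ⟨n, ?_⟩
    have : A ∩ Finset.Icc 1 n = A := Finset.inter_eq_left.mpr (hF A hA)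
    simpa [this] using hA
  set m : Finset ℕ → ℕ := fun A => sInf {k | A ∩ Finset.Icc 1 k ∈ F} with hm
  set φ : Finset ℕ → Finset ℕ := fun A => A ∩ Finset.Icc 1 (m A) with hφ
  have hφF : ∀ A ∈ F, φ A ∈ F := fun A hA => Nat.sInf_mem (hexists A hA)
  have hlt : ∀ A : Finset ℕ, ∀ k, k < m A → A ∩ Finset.Icc 1 k ∉ F := by
    intro A k hk
    exact Nat.notMem_of_lt_sInf hk
  have hm1 : ∀ A ∈ F, 1 ≤ m A := by
    intro A hA
    by_contra h
    have h0 : m A = 0 := by omega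
    have := hφF A hA
    rw [hφ] at this
    simp only [h0] at this
    have hIcc : Finset.Icc 1 0 = (∅ : Finset ℕ) := by decide
    rw [hIcc, Finset.inter_empty] at this
    exact hemp this
  have hmA : ∀ A ∈ F, m A ∈ A := by
    intro A hA
    by_contra h
    have h1 : 1 ≤ m A := hm1 A hA
    have heq : A ∩ Finset.Icc 1 (m A) = A ∩ Finset.Icc 1 (m A - 1) := by
      ext x
      simp only [Finset.mem_inter, Finset.mem_Icc]
      constructor
      · rintro ⟨hxA, hx1, hx2⟩
        have : x ≠ m A := fun hx => h (hx ▸ hxA)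
        exact ⟨hxA, hx1, by omega⟩
      · rintro ⟨hxA, hx1, hx2⟩
        exact ⟨hxA, hx1, by omega⟩
    have hmem : A ∩ Finset.Icc 1 (m A) ∈ F := hφF A hA
    rw [heq] at hmem
    exact hlt A (m A - 1) (by omega) hmem
  have hφsub : ∀ A, φ A ⊆ A := fun A => Finset.inter_subset_left
  have hsupφ : ∀ A ∈ F, (φ A).sup id = m A := by
    intro A hA
    apply le_antisymm
    · apply Finset.sup_le
      intro x hx
      rw [hφ] at hx
      simp only [Finset.mem_inter, Finset.mem_Icc] at hx
      exact hx.2.2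
    · apply Finset.le_sup (f := id)
      rw [hφ]
      simp only [Finset.mem_inter, Finset.mem_Icc]
      exact ⟨hmA A hA, hm1 A hA, le_rfl⟩
  -- minimality of φ A
  have hφmin : ∀ A ∈ F, ∀ B ∈ F, ¬ B ⊂ φ A := by
    intro A hA B hB hBA
    have h1 : 1 ≤ m A := hm1 A hA
    have hAn : m A ≤ n := (hground A hA (m A) (hmA A hA)).2
    -- it suffices to find a member of F inside A ∩ Icc 1 (m A - 1)
    have key : ∀ C ∈ F, C ⊆ A ∩ Finset.Icc 1 (m A - 1) → False := by
      intro C hC hCs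
      have hsub' : A ∩ Finset.Icc 1 (m A - 1) ⊆ ground n := by
        intro x hx
        exact hF A hA (Finset.mem_of_mem_inter_left hx)
      exact hlt A (m A - 1) (by omega) (hup C hC _ hCs hsub')
    by_cases hMB : m A ∈ B
    · -- use compression
      obtain ⟨x, hxE, hxB⟩ := Finset.exists_of_ssubset hBA
      have hxA : x ∈ A := hφsub A hxE
      have hx1 : 1 ≤ x := (hground A hA x hxA).1
      have hxle : x ≤ m A := by
        rw [hφ] at hxE
        simp only [Finset.mem_inter, Finset.mem_Icc] at hxE
        exact hxE.2.2
      have hxlt : x < m A := lt_of_le_of_ne hxle (fun h => hxB (h ▸ hMB))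
      have hc := hlc B hB x (m A) hx1 hxlt hAn
      rw [compress, if_pos ⟨hMB, hxB⟩] at hc
      refine key _ hc ?_
      intro y hy
      simp only [Finset.mem_insert, Finset.mem_erase] at hy
      simp only [Finset.mem_inter, Finset.mem_Icc]
      rcases hy with rfl | ⟨hyM, hyB⟩
      · exact ⟨hxA, hx1, by omega⟩
      · have hyE : y ∈ φ A := hBA.subset hyB
        rw [hφ] at hyE
        simp only [Finset.mem_inter, Finset.mem_Icc] at hyE
        exact ⟨hyE.1, hyE.2.1, by omega⟩
    · refine key _ hB ?_
      intro y hy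
      have hyE : y ∈ φ A := hBA.subset hy
      have hyM : y ≠ m A := fun h => hMB (h ▸ hy)
      rw [hφ] at hyE
      simp only [Finset.mem_inter, Finset.mem_Icc] at hyE
      simp only [Finset.mem_inter, Finset.mem_Icc]
      exact ⟨hyE.1, hyE.2.1, by omega⟩
  have hφG : ∀ A ∈ F, φ A ∈ F.filter (fun A => ∀ B ∈ F, ¬ B ⊂ A) := by
    intro A hA
    exact Finset.mem_filter.mpr ⟨hφF A hA, hφmin A hA⟩
  rw [Finset.card_eq_sum_card_fiberwise hφG]
  apply Finset.sum_congr rfl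
  intro E hE
  rw [Finset.mem_filter] at hE
  obtain ⟨hEF, hEmin⟩ := hE
  set M := E.sup id with hM
  have hEne : E.Nonempty := by
    rcases Finset.eq_empty_or_nonempty E with h | h
    · exact absurd (h ▸ hEF) hemp
    · exact h
  have hME : M ∈ E := by
    obtain ⟨b, hb, hb'⟩ := Finset.exists_mem_eq_sup E hEne id
    rw [hM, hb']
    exact hb
  have hM1 : 1 ≤ M := (hground E hEF M hME).1
  have hMn : M ≤ n := (hground E hEF M hME).2
  have hEIcc : ∀ x ∈ E, 1 ≤ x ∧ x ≤ M := by
    intro x hx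
    exact ⟨(hground E hEF x hx).1, Finset.le_sup (f := id) hx⟩
  -- bijection between the fiber and the powerset of Icc (M+1) n
  have hcard : (F.filter (fun A => φ A = E)).card
      = (Finset.Icc (M + 1) n).powerset.card := by
    apply Finset.card_bij' (fun A _ => A \ E) (fun S _ => E ∪ S)
    · -- A \ E ∈ powerset
      intro A hA
      rw [Finset.mem_filter] at hA
      obtain ⟨hAF, hAφ⟩ := hA
      rw [Finset.mem_powerset]
      intro x hx
      rw [Finset.mem_sdiff] at hx
      obtain ⟨hxA, hxE⟩ := hx
      have hx1 : 1 ≤ x := (hground A hAF x hxA).1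
      have hxn : x ≤ n := (hground A hAF x hxA).2
      have hmM : m A = M := by
        have := hsupφ A hAF
        rw [hAφ] at this
        omega
      have hxM : ¬ x ≤ M := by
        intro hxM
        apply hxE
        rw [← hAφ, hφ]
        simp only [Finset.mem_inter, Finset.mem_Icc]
        exact ⟨hxA, hx1, by omega⟩
      rw [Finset.mem_Icc]
      omega
    · -- E ∪ S ∈ fiber
      intro S hS
      rw [Finset.mem_powerset] at hS
      have hSgt : ∀ x ∈ S, M + 1 ≤ x ∧ x ≤ n := by
        intro x hx
        have := hS hx
        rw [Finset.mem_Icc] at this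
        exact this
      have hUsub : E ∪ S ⊆ ground n := by
        intro x hx
        simp only [ground, Finset.mem_Icc]
        rcases Finset.mem_union.mp hx with h | h
        · exact hground E hEF x h
        · have := hSgt x h
          omega
      have hUF : E ∪ S ∈ F := hup E hEF _ Finset.subset_union_left hUsub
      have hInter : (E ∪ S) ∩ Finset.Icc 1 M = E := by
        ext x
        simp only [Finset.mem_inter, Finset.mem_union, Finset.mem_Icc]
        constructor
        · rintro ⟨h | h, h1, h2⟩
          · exact h
          · have := hSgt x h
            omega
        · intro h
          exact ⟨Or.inl h, (hEIcc x h).1, (hEIcc x h).2⟩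
      have hle : m (E ∪ S) ≤ M := by
        apply Nat.sInf_le
        show (E ∪ S) ∩ Finset.Icc 1 M ∈ F
        rw [hInter]; exact hEF
      have hgeq : m (E ∪ S) = M := by
        rcases lt_or_eq_of_le hle with hlt' | heq
        · exfalso
          have hmem : (E ∪ S) ∩ Finset.Icc 1 (m (E ∪ S)) ∈ F := hφF _ hUF
          have heq2 : (E ∪ S) ∩ Finset.Icc 1 (m (E ∪ S)) = E ∩ Finset.Icc 1 (m (E ∪ S)) := by
            ext x
            simp only [Finset.mem_inter, Finset.mem_union, Finset.mem_Icc]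
            constructor
            · rintro ⟨h | h, h1, h2⟩
              · exact ⟨h, h1, h2⟩
              · have := hSgt x h
                omega
            · rintro ⟨h, h1, h2⟩
              exact ⟨Or.inl h, h1, h2⟩
          rw [heq2] at hmem
          have hss : E ∩ Finset.Icc 1 (m (E ∪ S)) ⊂ E := by
            refine Finset.ssubset_iff_of_subset Finset.inter_subset_left |>.mpr ?_
            refine ⟨M, hME, ?_⟩
            simp only [Finset.mem_inter, Finset.mem_Icc]
            rintro ⟨-, -, h2⟩
            omega
          exact hEmin _ hmem hss
        · exact heq
      rw [Finset.mem_filter]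
      refine ⟨hUF, ?_⟩
      rw [hφ]
      show (E ∪ S) ∩ Finset.Icc 1 (m (E ∪ S)) = E
      rw [hgeq, hInter]
    · -- left inverse : E ∪ (A \ E) = A
      intro A hA
      rw [Finset.mem_filter] at hA
      have hEA : E ⊆ A := by
        rw [← hA.2, hφ]
        exact Finset.inter_subset_left
      exact Finset.union_sdiff_of_subset hEA
    · -- right inverse : (E ∪ S) \ E = S
      intro S hS
      rw [Finset.mem_powerset] at hS
      apply Finset.union_sdiff_cancel_left
      rw [Finset.disjoint_left]
      intro x hxE hxS
      have h1 := hEIcc x hxE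
      have h2 := hS hxS
      rw [Finset.mem_Icc] at h2
      omega
  rw [hcard, Finset.card_powerset, Nat.card_Icc]
  congr 1
  omega
end

section
/- Let n ≥ 1 and let 𝓕 be a left-compressed family of subsets of [n] that is 3-intersecting. If A, B ∈ 𝓕 satisfy n ∈ A ∩ B and |A ∩ B| = 3, then A ∪ B = [n]. -/
open Finset

/-- in a left-compressed 3-intersecting family of subsets of `[n]`,
if `A, B ∈ F`, `n ∈ A ∩ B` and `|A ∩ B| = 3`, then `A ∪ B = [n]`. -/
theorem stmt18 (n : ℕ) (hn : 1 ≤ n) (F : Finset (Finset ℕ))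
    (hF : FamilyOn n F) (hlc : LeftCompressed n F) (h3 : ThreeIntersecting F)
    (A B : Finset ℕ) (hA : A ∈ F) (hB : B ∈ F)
    (hnAB : n ∈ A ∩ B) (hcard : (A ∩ B).card = 3) :
    A ∪ B = ground n := by
  rw [mem_inter] at hnAB
  obtain ⟨hnA, hnB⟩ := hnAB
  apply Finset.Subset.antisymm (Finset.union_subset (hF A hA) (hF B hB))
  intro x hx
  by_contra hxAB
  rw [Finset.mem_union, not_or] at hxAB
  obtain ⟨hxA, hxB⟩ := hxAB
  simp only [ground, Finset.mem_Icc] at hx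
  have hxn : x < n := lt_of_le_of_ne hx.2 (by rintro rfl; exact hxA hnA)
  have hA' := hlc A hA x n hx.1 hxn le_rfl
  rw [compress, if_pos ⟨hnA, hxA⟩] at hA'
  have hcard' := h3 _ hA' B hB
  have heq : insert x (A.erase n) ∩ B = (A ∩ B).erase n := by
    ext y
    simp only [Finset.mem_inter, Finset.mem_insert, Finset.mem_erase]
    constructor
    · rintro ⟨h1 | h1, h2⟩
      · exact absurd (h1 ▸ h2) hxB
      · exact ⟨h1.1, ⟨h1.2, h2⟩⟩
    · rintro ⟨h1, h2, h3⟩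
      exact ⟨Or.inr ⟨h1, h2⟩, h3⟩
  rw [heq, Finset.card_erase_of_mem (Finset.mem_inter.mpr ⟨hnA, hnB⟩), hcard] at hcard'
  omega
end

section
/- Let n ≥ 1 and let 𝓕 be a left-compressed family of subsets of [n] that is 3-wise intersecting. If A, B, C ∈ 𝓕 satisfy A ∩ B ∩ C = {n}, then every element i ∈ [n−1] belongs to exactly two of the sets A, B, C. -/
open Finset

lemma aux19 (n i : ℕ) (hi1 : 1 ≤ i) (hin : i < n) (F : Finset (Finset ℕ))
    (hlc : LeftCompressed n F) (h3w : ThreeWiseIntersecting F)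
    (X Y Z : Finset ℕ) (hX : X ∈ F) (hY : Y ∈ F) (hZ : Z ∈ F)
    (h : X ∩ Y ∩ Z = {n}) (hiX : i ∉ X) (hiY : i ∉ Y) : False := by
  have hnX : n ∈ X ∩ Y ∩ Z := by rw [h]; exact Finset.mem_singleton_self n
  simp only [Finset.mem_inter] at hnX
  have hX' : compress i n X ∈ F := hlc X hX i n hi1 hin le_rfl
  rw [compress, if_pos ⟨hnX.1.1, hiX⟩] at hX'
  obtain ⟨x, hx⟩ := h3w _ hX' Y hY Z hZ
  simp only [Finset.mem_inter, Finset.mem_insert, Finset.mem_erase] at hx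
  rcases hx.1.1 with rfl | ⟨hxn, hxX⟩
  · exact hiY hx.1.2
  · have : x ∈ X ∩ Y ∩ Z := by simp [hxX, hx.1.2, hx.2]
    rw [h, Finset.mem_singleton] at this
    exact hxn this

/-- in a left-compressed 3-wise intersecting family of subsets of `[n]`,
if `A, B, C ∈ F` and `A ∩ B ∩ C = {n}`, then every `i ∈ [n-1]` belongs to exactly
two of `A`, `B`, `C`. -/
theorem stmt19 (n : ℕ) (hn : 1 ≤ n) (F : Finset (Finset ℕ))
    (hF : FamilyOn n F) (hlc : LeftCompressed n F) (h3w : ThreeWiseIntersecting F)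
    (A B C : Finset ℕ) (hA : A ∈ F) (hB : B ∈ F) (hC : C ∈ F)
    (hABC : A ∩ B ∩ C = {n}) :
    ∀ i ∈ ground (n - 1),
      (if i ∈ A then 1 else 0) + (if i ∈ B then 1 else 0) +
        (if i ∈ C then 1 else 0) = 2 := by
  intro i hi
  simp only [ground, Finset.mem_Icc] at hi
  have hin : i < n := lt_of_le_of_lt hi.2 (Nat.sub_lt hn one_pos)
  have hBCA : B ∩ C ∩ A = {n} := by rw [← hABC]; ext x; simp only [Finset.mem_inter]; tauto
  have hACB : A ∩ C ∩ B = {n} := by rw [← hABC]; ext x; simp only [Finset.mem_inter]; tauto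
  have hnot3 : ¬ (i ∈ A ∧ i ∈ B ∧ i ∈ C) := by
    rintro ⟨h1, h2, h3⟩
    have : i ∈ A ∩ B ∩ C := by simp [h1, h2, h3]
    rw [hABC, Finset.mem_singleton] at this
    exact absurd this hin.ne
  by_cases h1 : i ∈ A <;> by_cases h2 : i ∈ B <;> by_cases h3 : i ∈ C
  · exact absurd ⟨h1, h2, h3⟩ hnot3
  · simp [h1, h2, h3]
  · simp [h1, h2, h3]
  · exact absurd (aux19 n i hi.1 hin F hlc h3w B C A hB hC hA hBCA h2 h3) id
  · simp [h1, h2, h3]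
  · exact absurd (aux19 n i hi.1 hin F hlc h3w A C B hA hC hB hACB h1 h3) id
  · exact absurd (aux19 n i hi.1 hin F hlc h3w A B C hA hB hC hABC h1 h2) id
  · exact absurd (aux19 n i hi.1 hin F hlc h3w A B C hA hB hC hABC h1 h2) id
end
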